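/- arXiv:2509.12902 — 7 statements merged into one kernel-verified Lean document; each statement's English description precedes it below -/
import Mathlib

section
/- Let γ = [[a,b],[c,d]] ∈ SL(2,ℝ) with abcd ≠ 0, and let h(x,y) = a²x/y + b²/(xy) + c²xy + d²y/x - 2 for x,y > 0. Then the infimum of h over x,y > 0 equals 2|ad| + 2|bc| - 2, attained at x² = |bd/(ac)|, y² = |ab/(cd)|. Consequently, if abcd > 0 the infimum equals 2|ad+bc| - 2, and if abcd < 0 the infimum equals 0. -/
/-!
Grouping the four terms as `(a² r + d² / r) + (c² ρ + b² / ρ)` with `r = x / y` and `ρ = x y`,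
each bracket is at least `2 |ad|`, resp. `2 |bc|`, by AM-GM, with equality at `r = |d / a|` and
`ρ = |b / c|`, which is where the given point lies. When `ad` and `bc` have opposite signs,
`|ad| + |bc| = |ad - bc| = 1`.
-/

open Real

lemma two_mul_abs_mul_le_sq_mul_add_sq_div (p q : ℝ) {r : ℝ} (hr : 0 < r) :
    2 * |p * q| ≤ p ^ 2 * r + q ^ 2 / r := by
  have hgap : p ^ 2 * r + q ^ 2 / r - 2 * |p * q| = (|p| * r - |q|) ^ 2 / r := by
    rw [abs_mul]; field_simp; rw [← sq_abs p, ← sq_abs q]; ring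
  have : 0 ≤ (|p| * r - |q|) ^ 2 / r := by positivity
  linarith

lemma sq_mul_abs_div_add_sq_div_abs_div (p q : ℝ) (hp : p ≠ 0) (hq : q ≠ 0) :
    p ^ 2 * |q / p| + q ^ 2 / |q / p| = 2 * |p * q| := by
  have hp' : 0 < |p| := abs_pos.mpr hp
  have hq' : 0 < |q| := abs_pos.mpr hq
  rw [abs_div, abs_mul, ← sq_abs p, ← sq_abs q]
  field_simp
  ring

lemma sqrt_abs_of_eq_sq {u w : ℝ} (h : u = w ^ 2) : √|u| = |w| := by
  rw [h, abs_sq, Real.sqrt_sq_eq_abs]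

lemma abs_add_abs_of_mul_pos {u v : ℝ} (h : 0 < u * v) : |u| + |v| = |u + v| := by
  refine ((abs_add_eq_add_abs_iff u v).mpr ?_).symm
  rcases mul_pos_iff.mp h with ⟨hu, hv⟩ | ⟨hu, hv⟩
  · exact Or.inl ⟨hu.le, hv.le⟩
  · exact Or.inr ⟨hu.le, hv.le⟩

lemma abs_add_abs_of_mul_neg {u v : ℝ} (h : u * v < 0) : |u| + |v| = |u - v| := by
  rw [← abs_neg v, sub_eq_add_neg]
  exact abs_add_abs_of_mul_pos (by linarith [neg_mul_eq_mul_neg u v])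

theorem stmt1 (a b c d : ℝ) (hdet : a * d - b * c = 1) (h0 : a * b * c * d ≠ 0)
    (h : ℝ → ℝ → ℝ)
    (hh : ∀ x y, h x y = a ^ 2 * x / y + b ^ 2 / (x * y) + c ^ 2 * x * y + d ^ 2 * y / x - 2) :
    IsLeast {z | ∃ x > (0 : ℝ), ∃ y > (0 : ℝ), h x y = z} (2 * |a * d| + 2 * |b * c| - 2) ∧
    h (Real.sqrt |b * d / (a * c)|) (Real.sqrt |a * b / (c * d)|)
      = 2 * |a * d| + 2 * |b * c| - 2 ∧
    (0 < a * b * c * d → 2 * |a * d| + 2 * |b * c| - 2 = 2 * |a * d + b * c| - 2) ∧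
    (a * b * c * d < 0 → 2 * |a * d| + 2 * |b * c| - 2 = 0) := by
  have ha : a ≠ 0 := by rintro rfl; simp at h0
  have hb : b ≠ 0 := by rintro rfl; simp at h0
  have hc : c ≠ 0 := by rintro rfl; simp at h0
  have hd : d ≠ 0 := by rintro rfl; simp at h0
  have hgroup : ∀ x > (0 : ℝ), ∀ y > (0 : ℝ),
      h x y = (a ^ 2 * (x / y) + d ^ 2 / (x / y)) + (c ^ 2 * (x * y) + b ^ 2 / (x * y)) - 2 := by
    intro x hx y hy
    rw [hh]; field_simp; ring
  set s := √|b * d / (a * c)|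
  set t := √|a * b / (c * d)|
  have hs : 0 < s := Real.sqrt_pos.mpr (abs_pos.mpr (by positivity))
  have ht : 0 < t := Real.sqrt_pos.mpr (abs_pos.mpr (by positivity))
  have hquot : s / t = |d / a| := by
    rw [← Real.sqrt_div (abs_nonneg _), ← abs_div, sqrt_abs_of_eq_sq]; field_simp
  have hprod : s * t = |b / c| := by
    rw [← Real.sqrt_mul (abs_nonneg _), ← abs_mul, sqrt_abs_of_eq_sq]; field_simp
  have hval : h s t = 2 * |a * d| + 2 * |b * c| - 2 := by
    rw [hgroup s hs t ht, hquot, hprod, sq_mul_abs_div_add_sq_div_abs_div a d ha hd,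
      sq_mul_abs_div_add_sq_div_abs_div c b hc hb, mul_comm c b]
  have habcd : a * b * c * d = (a * d) * (b * c) := by ring
  refine ⟨⟨⟨s, hs, t, ht, hval⟩, ?_⟩, hval, fun hpos => ?_, fun hneg => ?_⟩
  · rintro z ⟨x, hx, y, hy, rfl⟩
    rw [hgroup x hx y hy]
    have h₁ := two_mul_abs_mul_le_sq_mul_add_sq_div a d (div_pos hx hy)
    have h₂ := two_mul_abs_mul_le_sq_mul_add_sq_div c b (mul_pos hx hy)
    rw [mul_comm c b] at h₂
    linarith
  · rw [habcd] at hpos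
    rw [← abs_add_abs_of_mul_pos hpos]; ring
  · rw [habcd] at hneg
    rw [← mul_add, abs_add_abs_of_mul_neg hneg, hdet, abs_one]; ring
end

section
/- Let γ = [[a,b],[c,d]] ∈ SL(2,ℝ) with abcd > 0, so that setting B = |ad + bc| one has B > 1 and B² - 1 = 4abcd. Then for any continuous, rapidly decreasing f : [1,∞) → ℝ, the integral ∫₀^∞ f((a²y² + b²)(c²y² + d²)/y²) dy/y equals 2 ∫_{√(B²-1)}^∞ f(x²+1)/√(x² - (B²-1)) dx. -/
open Real MeasureTheory Set

/-!
Since `ad - bc = 1`, the argument of `f` is `(p y + q / y)² + 1` with `p = |ac|`, `q = |bd|`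
and `pq = abcd`. The map `φ y = p y + q / y` is invariant under `y ↦ (q / p) / y`, which swaps
`(0, √(q/p))` and `(√(q/p), ∞)`, and `φ` maps each of these branches bijectively onto
`(√(4pq), ∞)`. On both branches `|φ' y| / √(φ(y)² - 4pq) = 1 / y`, so the substitution `x = φ y`
turns each half of the left-hand side into one copy of the right-hand side.
-/

noncomputable def joukowski (p q y : ℝ) : ℝ := p * y + q / y

lemma abs_mul_mul_abs_mul_of_nonneg {a b c d : ℝ} (habcd : 0 ≤ a * b * c * d) :
    |a * c| * |b * d| = a * b * c * d := by
  rw [← abs_mul, ← abs_of_nonneg habcd]; ring_nf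

lemma mul_div_sq_eq_joukowski_sq_add_one {a b c d : ℝ} (hdet : a * d - b * c = 1)
    (habcd : 0 ≤ a * b * c * d) {y : ℝ} (hy : y ≠ 0) :
    (a ^ 2 * y ^ 2 + b ^ 2) * (c ^ 2 * y ^ 2 + d ^ 2) / y ^ 2
      = joukowski |a * c| |b * d| y ^ 2 + 1 := by
  have hpq := abs_mul_mul_abs_mul_of_nonneg habcd
  have hp : |a * c| ^ 2 = (a * c) ^ 2 := sq_abs _
  have hq : |b * d| ^ 2 = (b * d) ^ 2 := sq_abs _
  unfold joukowski
  field_simp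
  linear_combination y ^ 2 * (a * d - b * c + 1) * hdet - y ^ 4 * hp - hq - 2 * y ^ 2 * hpq

lemma sqrt_lt_iff_div_lt_sqrt {r y : ℝ} (hr : 0 < r) (hy : 0 < y) : √r < y ↔ r / y < √r := by
  rw [div_lt_iff₀ hy, ← mul_lt_mul_iff_right₀ (sqrt_pos.2 hr), mul_self_sqrt hr.le]

section Joukowski

variable {p q : ℝ}

lemma hasDerivAt_joukowski {y : ℝ} (hy : y ≠ 0) :
    HasDerivAt (joukowski p q) (p - q / y ^ 2) y := by
  have h := ((hasDerivAt_id y).const_mul p).add ((hasDerivAt_inv hy).const_mul q)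
  have e : joukowski p q = fun z ↦ p * id z + q * z⁻¹ := by
    funext z; simp only [joukowski, id, div_eq_mul_inv]
  rw [e]
  exact h.congr_deriv (by ring)

lemma continuousOn_joukowski : ContinuousOn (joukowski p q) (Ioi 0) :=
  fun _ hy ↦ (hasDerivAt_joukowski (ne_of_gt hy)).continuousAt.continuousWithinAt

lemma joukowski_div (hp : p ≠ 0) (hq : q ≠ 0) {y : ℝ} (hy : y ≠ 0) :
    joukowski p q (q / p / y) = joukowski p q y := by
  unfold joukowski
  field_simp
  ring

lemma joukowski_sq_sub {y : ℝ} (hy : y ≠ 0) :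
    joukowski p q y ^ 2 - 4 * (p * q) = (y * (p - q / y ^ 2)) ^ 2 := by
  unfold joukowski
  field_simp
  ring

lemma eq_of_joukowski_eq {y z : ℝ} (hy : y ≠ 0) (hz : z ≠ 0) (hyz : p * (y * z) ≠ q)
    (h : joukowski p q y = joukowski p q z) : y = z := by
  unfold joukowski at h
  field_simp at h
  have : (y - z) * (p * (y * z) - q) = 0 := by linear_combination h
  exact sub_eq_zero.1 ((mul_eq_zero.1 this).resolve_right (sub_ne_zero.2 hyz))

lemma sub_div_sq_ne_zero {y : ℝ} (hy : y ≠ 0) (hyq : p * y ^ 2 ≠ q) : p - q / y ^ 2 ≠ 0 :=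
  sub_ne_zero.2 fun h ↦ hyq ((eq_div_iff (pow_ne_zero 2 hy)).1 h)

lemma sqrt_div_lt_iff (hp : 0 < p) {y : ℝ} (hy : 0 < y) : √(q / p) < y ↔ q < p * y ^ 2 := by
  rw [sqrt_lt' hy, div_lt_iff₀ hp, mul_comm]

lemma lt_sqrt_div_iff (hp : 0 < p) {y : ℝ} (hy : 0 ≤ y) : y < √(q / p) ↔ p * y ^ 2 < q := by
  rw [lt_sqrt hy, lt_div_iff₀ hp, mul_comm]

lemma sqrt_lt_joukowski (hp : 0 < p) (hq : 0 < q) {y : ℝ} (hy : 0 < y) (hyq : p * y ^ 2 ≠ q) :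
    √(4 * (p * q)) < joukowski p q y := by
  have hpos : 0 < joukowski p q y := by unfold joukowski; positivity
  rw [sqrt_lt' hpos, ← sub_pos, joukowski_sq_sub hy.ne']
  exact sq_pos_of_ne_zero (mul_ne_zero hy.ne' (sub_div_sq_ne_zero hy.ne' hyq))

lemma image_joukowski_Ioi (hp : 0 < p) (hq : 0 < q) :
    joukowski p q '' Ioi √(q / p) = Ioi √(4 * (p * q)) := by
  ext x
  constructor
  · rintro ⟨y, hy, rfl⟩
    have hy0 : 0 < y := (sqrt_nonneg _).trans_lt hy
    exact sqrt_lt_joukowski hp hq hy0 (ne_of_gt ((sqrt_div_lt_iff hp hy0).1 hy))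
  · intro hx
    have hx0 : 0 < x := (sqrt_nonneg _).trans_lt hx
    have hx2 : 4 * (p * q) < x ^ 2 := (sqrt_lt' hx0).1 hx
    set s := √(x ^ 2 - 4 * (p * q))
    have hs : s ^ 2 = x ^ 2 - 4 * (p * q) := sq_sqrt (by linarith)
    have hs0 : 0 ≤ s := sqrt_nonneg _
    -- the larger root of `p y² - x y + q = 0`
    refine ⟨(x + s) / (2 * p), ?_, ?_⟩
    · rw [mem_Ioi, sqrt_lt' (by positivity), div_lt_iff₀ hp, div_pow, mul_pow,
        div_mul_eq_mul_div, lt_div_iff₀ (by positivity)]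
      have : 4 * (p * q) < (x + s) ^ 2 := by nlinarith
      nlinarith [mul_lt_mul_of_pos_left this hp]
    · have hxs : 0 < x + s := by positivity
      unfold joukowski
      field_simp
      linear_combination hs

lemma image_joukowski_Ioo (hp : 0 < p) (hq : 0 < q) :
    joukowski p q '' Ioo 0 √(q / p) = Ioi √(4 * (p * q)) := by
  have hr : 0 < q / p := div_pos hq hp
  rw [← image_joukowski_Ioi hp hq]
  ext x
  constructor
  · rintro ⟨y, ⟨hy0, hy⟩, rfl⟩
    refine ⟨q / p / y, ?_, joukowski_div hp.ne' hq.ne' hy0.ne'⟩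
    rwa [mem_Ioi, sqrt_lt_iff_div_lt_sqrt hr (div_pos hr hy0), div_div_cancel₀ hr.ne']
  · rintro ⟨y, hy, rfl⟩
    have hy0 : 0 < y := (sqrt_nonneg _).trans_lt hy
    exact ⟨q / p / y, ⟨div_pos hr hy0, (sqrt_lt_iff_div_lt_sqrt hr hy0).1 hy⟩,
      joukowski_div hp.ne' hq.ne' hy0.ne'⟩

lemma injOn_joukowski_Ioi (hp : 0 < p) (hq : 0 < q) : InjOn (joukowski p q) (Ioi √(q / p)) := by
  intro y hy z hz h
  have ht := sqrt_nonneg (q / p)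
  have hyz : q / p < y * z := by
    rw [← mul_self_sqrt (div_pos hq hp).le]; exact mul_lt_mul'' hy hz ht ht
  exact eq_of_joukowski_eq (ht.trans_lt hy).ne' (ht.trans_lt hz).ne'
    (ne_of_gt ((div_lt_iff₀' hp).1 hyz)) h

lemma injOn_joukowski_Ioo (hp : 0 < p) (hq : 0 < q) :
    InjOn (joukowski p q) (Ioo 0 √(q / p)) := by
  intro y ⟨hy0, hy⟩ z ⟨hz0, hz⟩ h
  have hyz : y * z < q / p := by
    rw [← mul_self_sqrt (div_pos hq hp).le]; exact mul_lt_mul'' hy hz hy0.le hz0.le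
  exact eq_of_joukowski_eq hy0.ne' hz0.ne' (ne_of_lt ((lt_div_iff₀' hp).1 hyz)) h

lemma abs_deriv_joukowski_div_sqrt {y : ℝ} (hy : 0 < y) (hyq : p * y ^ 2 ≠ q) :
    |p - q / y ^ 2| / √(joukowski p q y ^ 2 - 4 * (p * q)) = y⁻¹ := by
  have hd := sub_div_sq_ne_zero hy.ne' hyq
  rw [joukowski_sq_sub hy.ne', sqrt_sq_eq_abs, abs_mul, abs_of_pos hy]
  field_simp

lemma setIntegral_image_joukowski (g : ℝ → ℝ) {s : Set ℝ} (hs : MeasurableSet s)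
    (hs0 : s ⊆ Ioi 0) (hsq : ∀ y ∈ s, p * y ^ 2 ≠ q) (hinj : InjOn (joukowski p q) s) :
    ∫ x in joukowski p q '' s, g x / √(x ^ 2 - 4 * (p * q))
      = ∫ y in s, g (joukowski p q y) / y := by
  rw [integral_image_eq_integral_abs_deriv_smul hs
    (fun y hy ↦ (hasDerivAt_joukowski (hs0 hy).ne').hasDerivWithinAt) hinj]
  refine setIntegral_congr_fun hs fun y hy ↦ ?_
  rw [smul_eq_mul, mul_div_left_comm, abs_deriv_joukowski_div_sqrt (hs0 hy) (hsq y hy),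
    div_eq_mul_inv]

theorem integral_comp_joukowski_div (hp : 0 < p) (hq : 0 < q) (g : ℝ → ℝ)
    (hint : IntegrableOn (fun y ↦ g (joukowski p q y) / y) (Ioi 0)) :
    ∫ y in Ioi 0, g (joukowski p q y) / y
      = 2 * ∫ x in Ioi √(4 * (p * q)), g x / √(x ^ 2 - 4 * (p * q)) := by
  have ht := sqrt_nonneg (q / p)
  have hsplit : ∫ y in Ioi 0, g (joukowski p q y) / y
      = (∫ y in Ioo 0 √(q / p), g (joukowski p q y) / y)
        + ∫ y in Ioi √(q / p), g (joukowski p q y) / y := by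
    rw [← Ioc_union_Ioi_eq_Ioi ht, setIntegral_union (Ioc_disjoint_Ioi le_rfl) measurableSet_Ioi
      (hint.mono_set Ioc_subset_Ioi_self) (hint.mono_set (Ioi_subset_Ioi ht)),
      integral_Ioc_eq_integral_Ioo]
  have hlow : ∀ y ∈ Ioo 0 √(q / p), p * y ^ 2 ≠ q := fun y ⟨hy0, hy⟩ ↦
    ne_of_lt ((lt_sqrt_div_iff hp hy0.le).1 hy)
  have hhigh : ∀ y ∈ Ioi √(q / p), p * y ^ 2 ≠ q := fun y hy ↦
    ne_of_gt ((sqrt_div_lt_iff hp (ht.trans_lt hy)).1 hy)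
  have hlow_eq := setIntegral_image_joukowski g measurableSet_Ioo Ioo_subset_Ioi_self hlow
    (injOn_joukowski_Ioo hp hq)
  have hhigh_eq := setIntegral_image_joukowski g measurableSet_Ioi (Ioi_subset_Ioi ht) hhigh
    (injOn_joukowski_Ioi hp hq)
  rw [image_joukowski_Ioo hp hq] at hlow_eq
  rw [image_joukowski_Ioi hp hq] at hhigh_eq
  rw [hsplit, ← hlow_eq, ← hhigh_eq]
  ring

end Joukowski

lemma integrableOn_Ioi_of_le_const_of_le_rpow {F : ℝ → ℝ} {a b K L r : ℝ} (hab : a ≤ b)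
    (hb : 0 < b) (hr : r < -1) (hF : ContinuousOn F (Ioi a)) (hK : ∀ y ∈ Ioc a b, ‖F y‖ ≤ K)
    (hL : ∀ y ∈ Ioi b, ‖F y‖ ≤ L * y ^ r) : IntegrableOn F (Ioi a) := by
  rw [← Ioc_union_Ioi_eq_Ioi hab]
  refine IntegrableOn.union ?_ ?_
  · exact Integrable.mono' (integrableOn_const measure_Ioc_lt_top.ne)
      ((hF.mono Ioc_subset_Ioi_self).aestronglyMeasurable measurableSet_Ioc)
      (ae_restrict_of_forall_mem measurableSet_Ioc hK)
  · exact Integrable.mono' ((integrableOn_Ioi_rpow_of_lt hr hb).const_mul L)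
      ((hF.mono (Ioi_subset_Ioi hab)).aestronglyMeasurable measurableSet_Ioi)
      (ae_restrict_of_forall_mem measurableSet_Ioi hL)

lemma integrableOn_comp_joukowski_sq_add_one_div {p q C : ℝ} (hp : 0 < p) (hq : 0 < q)
    {g : ℝ → ℝ} (hg : ContinuousOn g (Ici 1)) (hC : ∀ u ≥ (1 : ℝ), |g u| ≤ C / u) :
    IntegrableOn (fun y ↦ g (joukowski p q y ^ 2 + 1) / y) (Ioi 0) := by
  have hC0 : 0 ≤ C := by simpa using (abs_nonneg _).trans (hC 1 le_rfl)
  have hbound : ∀ y > 0, ‖g (joukowski p q y ^ 2 + 1) / y‖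
      ≤ C / ((joukowski p q y ^ 2 + 1) * y) := fun y hy ↦ by
    rw [norm_div, norm_of_nonneg hy.le, norm_eq_abs, ← div_div]
    exact div_le_div_of_nonneg_right
      (hC _ (le_add_of_nonneg_left (sq_nonneg (joukowski p q y)))) hy.le
  refine integrableOn_Ioi_of_le_const_of_le_rpow (K := C / q ^ 2) (L := C / p ^ 2) (r := -3)
    zero_le_one one_pos (by norm_num) ?_ (fun y ⟨hy0, hy1⟩ ↦ ?_) (fun y hy ↦ ?_)
  · refine ContinuousOn.div (hg.comp ((continuousOn_joukowski.pow 2).add continuousOn_const)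
      fun y _ ↦ ?_) continuousOn_id fun y hy ↦ ne_of_gt hy
    exact mem_Ici.2 (le_add_of_nonneg_left (sq_nonneg _))
  · refine (hbound y hy0).trans (div_le_div_of_nonneg_left hC0 (by positivity) ?_)
    have hle : q / y ≤ joukowski p q y := le_add_of_nonneg_left (by positivity)
    calc q ^ 2 = (q / y) ^ 2 * y ^ 2 := by field_simp
      _ ≤ (q / y) ^ 2 * y := by gcongr; nlinarith
      _ ≤ (joukowski p q y ^ 2 + 1) * y := by
        gcongr; nlinarith [pow_le_pow_left₀ (by positivity) hle 2]
  · have hy0 : 0 < y := one_pos.trans hy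
    rw [rpow_neg hy0.le, show (3 : ℝ) = (3 : ℕ) by norm_num, rpow_natCast, ← div_eq_mul_inv,
      div_div]
    refine (hbound y hy0).trans (div_le_div_of_nonneg_left hC0 (by positivity) ?_)
    have hle : p * y ≤ joukowski p q y := le_add_of_nonneg_right (by positivity)
    nlinarith [pow_le_pow_left₀ (by positivity) hle 2]

theorem stmt2 (a b c d : ℝ) (hdet : a * d - b * c = 1) (habcd : 0 < a * b * c * d)
    (B : ℝ) (hB : B = |a * d + b * c|) (f : ℝ → ℝ)
    (hf : ContinuousOn f (Set.Ici 1))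
    (hdecay : ∀ n : ℕ, ∃ C : ℝ, ∀ u ≥ (1 : ℝ), |f u| ≤ C / u ^ n) :
    1 < B ∧ B ^ 2 - 1 = 4 * (a * b * c * d) ∧
    ∫ y in Set.Ioi (0 : ℝ), f ((a ^ 2 * y ^ 2 + b ^ 2) * (c ^ 2 * y ^ 2 + d ^ 2) / y ^ 2) / y =
      2 * ∫ x in Set.Ioi (Real.sqrt (B ^ 2 - 1)),
        f (x ^ 2 + 1) / Real.sqrt (x ^ 2 - (B ^ 2 - 1)) := by
  have hBsq : B ^ 2 - 1 = 4 * (a * b * c * d) := by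
    rw [hB, sq_abs]
    linear_combination (a * d - b * c + 1) * hdet
  have hB1 : 1 < B := by nlinarith [hB ▸ abs_nonneg (a * d + b * c)]
  refine ⟨hB1, hBsq, ?_⟩
  obtain ⟨C, hC⟩ := hdecay 1
  have hpq := abs_mul_mul_abs_mul_of_nonneg habcd.le
  have hp : 0 < |a * c| := abs_pos.2 fun h ↦ by simp [← hpq, h] at habcd
  have hq : 0 < |b * d| := abs_pos.2 fun h ↦ by simp [← hpq, h] at habcd
  rw [setIntegral_congr_fun measurableSet_Ioi fun y hy ↦ by
      rw [mul_div_sq_eq_joukowski_sq_add_one hdet habcd.le (ne_of_gt hy)],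
    hBsq, ← hpq]
  exact integral_comp_joukowski_div hp hq (fun x ↦ f (x ^ 2 + 1))
    (integrableOn_comp_joukowski_sq_add_one_div hp hq hf (by simpa using hC))
end

section
/- Let γ = [[a,b],[c,d]] ∈ SL(2,ℝ) with abcd < 0 and B = |ad + bc| < 1. Then for any continuous, rapidly decreasing f : [1,∞) → ℝ, ∫₀^∞ f((a²y² + b²)(c²y² + d²)/y²) dy/y = 2 ∫₀^∞ f(x²+1)/√(x² + 1 - B²) dx. -/
open Real MeasureTheory Set

/-!
With `p = ac` and `q = bd`, the identity `ad - bc = 1` gives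
`(a²y² + b²)(c²y² + d²)/y² = φ(y)² + 1` for `φ(y) = p y + q/y`, and `abcd < 0` makes `φ` a
diffeomorphism of `(0, ∞)` onto `ℝ`. Since `B² = 1 + 4pq`, the Jacobian satisfies
`|φ'(y)| y = |p y - q/y| = √(φ(y)² + 1 - B²)`, so the substitution `x = φ(y)` turns the left side
into the integral over `ℝ` of an even function of `x`.
-/

section Substitution

variable {p q : ℝ}

lemma hasDerivAt_mul_add_mul_inv (p q : ℝ) {y : ℝ} (hy : y ≠ 0) :
    HasDerivAt (fun y => p * y + q * y⁻¹) (p - q * (y ^ 2)⁻¹) y :=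
  (((hasDerivAt_id' y).const_mul p).fun_add ((hasDerivAt_inv hy).const_mul q)).congr_deriv
    (by ring)

lemma mul_add_mul_inv_eq_iff {y : ℝ} (hy : y ≠ 0) (u : ℝ) :
    p * y + q * y⁻¹ = u ↔ p * (y * y) + -u * y + q = 0 := by
  constructor <;> intro h
  · field_simp at h; linear_combination h
  · field_simp; linear_combination h

lemma exists_pos_quadratic_root_of_pos_of_neg (hp : 0 < p) (hq : q < 0) (u : ℝ) :
    ∃ y > 0, p * (y * y) + -u * y + q = 0 := by
  have hdisc : 0 ≤ discrim p (-u) q := by unfold discrim; nlinarith [sq_nonneg u]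
  set s := √(discrim p (-u) q)
  have hs : discrim p (-u) q = s * s := (mul_self_sqrt hdisc).symm
  have hus : |u| < s := by
    rw [← sqrt_sq_eq_abs]
    exact sqrt_lt_sqrt (sq_nonneg _) (by unfold discrim; nlinarith)
  refine ⟨(-(-u) + s) / (2 * p), div_pos (by linarith [neg_le_abs u]) (by positivity), ?_⟩
  exact (quadratic_eq_zero_iff hp.ne' hs _).mpr (Or.inl rfl)

lemma injOn_mul_add_mul_inv (hpq : p * q < 0) : InjOn (fun y => p * y + q * y⁻¹) (Ioi 0) := by
  intro y₁ (hy₁ : 0 < y₁) y₂ (hy₂ : 0 < y₂) h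
  have hy₁₂ : 0 < y₁ * y₂ := mul_pos hy₁ hy₂
  have hfactor : (y₁ - y₂) * (p * (y₁ * y₂) - q) = 0 := by
    field_simp at h; linear_combination h
  have hne : p * (y₁ * y₂) - q ≠ 0 := by
    rcases lt_or_gt_of_ne (left_ne_zero_of_mul hpq.ne) with hp | hp
    · nlinarith [pos_of_mul_neg_right hpq hp.le]
    · nlinarith [neg_of_mul_neg_right hpq hp.le]
  exact sub_eq_zero.mp ((mul_eq_zero.mp hfactor).resolve_right hne)

lemma image_mul_add_mul_inv_Ioi (hpq : p * q < 0) :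
    (fun y => p * y + q * y⁻¹) '' Ioi 0 = univ := by
  refine eq_univ_of_forall fun u => ?_
  obtain ⟨y, hy, hroot⟩ : ∃ y > 0, p * (y * y) + -u * y + q = 0 := by
    rcases lt_or_gt_of_ne (left_ne_zero_of_mul hpq.ne) with hp | hp
    · obtain ⟨y, hy, hroot⟩ := exists_pos_quadratic_root_of_pos_of_neg (neg_pos.mpr hp)
        (neg_neg_of_pos (pos_of_mul_neg_right hpq hp.le)) (-u)
      exact ⟨y, hy, by linear_combination -hroot⟩
    · exact exists_pos_quadratic_root_of_pos_of_neg hp (neg_of_mul_neg_right hpq hp.le) u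
  exact ⟨y, hy, (mul_add_mul_inv_eq_iff hy.ne' u).mpr hroot⟩

theorem integral_comp_mul_add_mul_inv {E : Type*} [NormedAddCommGroup E] [NormedSpace ℝ E]
    (hpq : p * q < 0) (g : ℝ → E) :
    ∫ y in Ioi 0, |p - q * (y ^ 2)⁻¹| • g (p * y + q * y⁻¹) = ∫ u, g u := by
  rw [← integral_image_eq_integral_abs_deriv_smul measurableSet_Ioi
    (fun y hy => (hasDerivAt_mul_add_mul_inv p q (ne_of_gt hy)).hasDerivWithinAt)
    (injOn_mul_add_mul_inv hpq), image_mul_add_mul_inv_Ioi hpq, setIntegral_univ]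

lemma sqrt_sq_mul_add_mul_inv_sub {y : ℝ} (hy : 0 < y) :
    √((p * y + q * y⁻¹) ^ 2 - 4 * (p * q)) = |p - q * (y ^ 2)⁻¹| * y := by
  rw [show (p * y + q * y⁻¹) ^ 2 - 4 * (p * q) = ((p - q * (y ^ 2)⁻¹) * y) ^ 2 by field_simp; ring,
    sqrt_sq_eq_abs, abs_mul, abs_of_pos hy]

lemma div_eq_abs_deriv_mul_div_sqrt (hpq : p * q < 0) {y : ℝ} (hy : 0 < y) (z : ℝ) :
    z / y = |p - q * (y ^ 2)⁻¹| * (z / √((p * y + q * y⁻¹) ^ 2 - 4 * (p * q))) := by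
  have hderiv : p - q * (y ^ 2)⁻¹ ≠ 0 := by
    intro h
    rw [sub_eq_zero, eq_comm, mul_inv_eq_iff_eq_mul₀ (by positivity)] at h
    have : p * q = (p * y) ^ 2 := by rw [h]; ring
    linarith [sq_nonneg (p * y)]
  rw [sqrt_sq_mul_add_mul_inv_sub hy, mul_comm _ y, ← div_div,
    mul_div_cancel₀ _ (abs_ne_zero.mpr hderiv)]

end Substitution

lemma sq_add_sq_mul_sq_add_sq_div_sq (a b c d : ℝ) {y : ℝ} (hy : y ≠ 0) :
    (a ^ 2 * y ^ 2 + b ^ 2) * (c ^ 2 * y ^ 2 + d ^ 2) / y ^ 2 =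
      (a * c * y + b * d * y⁻¹) ^ 2 + (a * d - b * c) ^ 2 := by
  field_simp
  ring

theorem stmt3_general (a b c d : ℝ) (hdet : a * d - b * c = 1) (habcd : a * b * c * d < 0)
    (B : ℝ) (hB : B = |a * d + b * c|) (f : ℝ → ℝ) :
    ∫ y in Set.Ioi (0 : ℝ), f ((a ^ 2 * y ^ 2 + b ^ 2) * (c ^ 2 * y ^ 2 + d ^ 2) / y ^ 2) / y =
      2 * ∫ x in Set.Ioi (0 : ℝ), f (x ^ 2 + 1) / Real.sqrt (x ^ 2 + 1 - B ^ 2) := by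
  have hpq : a * c * (b * d) < 0 := by linarith [show a * c * (b * d) = a * b * c * d by ring]
  have hB2 : B ^ 2 = 4 * (a * c * (b * d)) + 1 := by
    rw [hB, sq_abs]
    linear_combination (a * d - b * c + 1) * hdet
  set h : ℝ → ℝ := fun x => f (x ^ 2 + 1) / √(x ^ 2 + 1 - B ^ 2) with hh
  calc _ = ∫ y in Ioi 0, |a * c - b * d * (y ^ 2)⁻¹| • h (a * c * y + b * d * y⁻¹) := by
        refine setIntegral_congr_fun measurableSet_Ioi fun y (hy : 0 < y) => ?_
        rw [sq_add_sq_mul_sq_add_sq_div_sq a b c d hy.ne', hdet, one_pow,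
          div_eq_abs_deriv_mul_div_sqrt hpq hy, smul_eq_mul]
        simp only [hh, hB2, add_sub_add_right_eq_sub]
    _ = ∫ x, h x := integral_comp_mul_add_mul_inv hpq h
    _ = 2 * ∫ x in Ioi 0, h x := by simp only [← integral_comp_abs, hh, sq_abs]

theorem stmt3 (a b c d : ℝ) (hdet : a * d - b * c = 1) (habcd : a * b * c * d < 0)
    (B : ℝ) (hB : B = |a * d + b * c|) (hB1 : B < 1) (f : ℝ → ℝ)
    (hf : ContinuousOn f (Set.Ici 1))
    (hdecay : ∀ n : ℕ, ∃ C : ℝ, ∀ u ≥ (1 : ℝ), |f u| ≤ C / u ^ n) :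
    ∫ y in Set.Ioi (0 : ℝ), f ((a ^ 2 * y ^ 2 + b ^ 2) * (c ^ 2 * y ^ 2 + d ^ 2) / y ^ 2) / y =
      2 * ∫ x in Set.Ioi (0 : ℝ), f (x ^ 2 + 1) / Real.sqrt (x ^ 2 + 1 - B ^ 2) :=
  stmt3_general a b c d hdet habcd B hB f
end

section
/- Fix real numbers 0 < X and Y > 0, and set H = Y² + 2YX, a = √(X² - 1), A = √((X+Y)² - 1) (assume X > 1). Define g : [0,∞) → ℝ by g(y) = 1 for y ≤ X², g(y) = ((X+Y)² - y)/H for X² ≤ y ≤ (X+Y)², and g(y) = 0 for y ≥ (X+Y)². Define F(u) = (2/(πH))(√((X+Y)² - u) - √(max(X² - u, 0))) for u ≤ (X+Y)² and F(u) = 0 for u > (X+Y)². Then for every v ≥ 0, ∫_v^∞ F(u)/√(u - v) du = g(v). -/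
/-!
For every `b`, the transform of the profile `√(b - u)` (which vanishes for `u ≥ b`) is
`π/2 · max (b - v) 0`: on `(v, b)` the function
`√(b - u) √(u - v) + (b - v)/2 · arcsin ((2u - b - v)/(b - v))` is a primitive of
`√(b - u)/√(u - v)`, and it increases by `π (b - v)/2` from `v` to `b`. Since `F` is `2/(πH)`
times the difference of the profiles for `b = (X + Y)²` and `b = X²`, its transform is
`(max ((X + Y)² - v) 0 - max (X² - v) 0)/H`, which is `g v` on each of the three ranges of `v`.
-/

open Real MeasureTheory Set

lemma integrableOn_Ioc_div_sqrt_sub {c : ℝ → ℝ} (hc : Continuous c) (v b : ℝ) :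
    IntegrableOn (fun u => c u / √(u - v)) (Ioc v b) := by
  rcases le_total b v with hbv | hvb
  · simp [Ioc_eq_empty_of_le hbv]
  have hpow : IntervalIntegrable (fun u => c u * (u - v) ^ (-(1 / 2) : ℝ)) volume v b := by
    have h := (intervalIntegral.intervalIntegrable_rpow' (a := 0) (b := b - v)
      (r := -(1 / 2)) (by norm_num)).comp_sub_right v
    simp only [zero_add, sub_add_cancel] at h
    exact h.continuousOn_mul hc.continuousOn
  rw [intervalIntegrable_iff_integrableOn_Ioc_of_le hvb] at hpow
  refine hpow.congr_fun (fun u hu => ?_) measurableSet_Ioc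
  have hpos : 0 < u - v := sub_pos.2 hu.1
  simp only [sqrt_eq_rpow, rpow_neg hpos.le, div_eq_mul_inv]

lemma hasDerivAt_sqrt_mul_sqrt_add_arcsin {v b u : ℝ} (hvu : v < u) (hub : u < b) :
    HasDerivAt (fun u => √(b - u) * √(u - v) + (b - v) / 2 * arcsin ((2 * u - b - v) / (b - v)))
      (√(b - u) / √(u - v)) u := by
  have hp : 0 < b - u := sub_pos.2 hub
  have hq : 0 < u - v := sub_pos.2 hvu
  have hbv : 0 < b - v := by linarith
  have hs_lt : (2 * u - b - v) / (b - v) < 1 := by rw [div_lt_one hbv]; linarith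
  have hs_gt : -1 < (2 * u - b - v) / (b - v) := by rw [lt_div_iff₀ hbv]; linarith
  have hsqrt_p := ((hasDerivAt_id u).const_sub b).sqrt hp.ne'
  have hsqrt_q := ((hasDerivAt_id u).sub_const v).sqrt hq.ne'
  have harcsin := ((hasDerivAt_arcsin hs_gt.ne' hs_lt.ne).comp u
    ((((hasDerivAt_id u).const_mul 2).sub_const b).sub_const v |>.div_const (b - v)))
  refine ((hsqrt_p.mul hsqrt_q).add (harcsin.const_mul ((b - v) / 2))).congr_deriv ?_
  simp only [id_eq]
  set p := √(b - u)
  set q := √(u - v)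
  have hp2 : p ^ 2 = b - u := sq_sqrt hp.le
  have hq2 : q ^ 2 = u - v := sq_sqrt hq.le
  have hp0 : 0 < p := sqrt_pos.2 hp
  have hq0 : 0 < q := sqrt_pos.2 hq
  have hroot : √(1 - ((2 * u - b - v) / (b - v)) ^ 2) = 2 * p * q / (b - v) := by
    rw [← sqrt_sq (by positivity : 0 ≤ 2 * p * q / (b - v))]
    congr 1
    field_simp
    rw [hp2, hq2]
    ring
  rw [hroot, show b - v = p ^ 2 + q ^ 2 by rw [hp2, hq2]; ring]
  field_simp
  ring

lemma integral_sqrt_sub_div_sqrt_sub {v b : ℝ} (hvb : v < b) :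
    ∫ u in v..b, √(b - u) / √(u - v) = π * (b - v) / 2 := by
  have hbv : b - v ≠ 0 := (sub_pos.2 hvb).ne'
  rw [intervalIntegral.integral_eq_sub_of_hasDerivAt_of_le hvb.le (by fun_prop)
    (fun u hu => hasDerivAt_sqrt_mul_sqrt_add_arcsin hu.1 hu.2)
    ((intervalIntegrable_iff_integrableOn_Ioc_of_le hvb.le).2
      (integrableOn_Ioc_div_sqrt_sub (by fun_prop) v b))]
  have htop : (2 * b - b - v) / (b - v) = 1 := by rw [← div_self hbv]; ring_nf
  have hbot : (2 * v - b - v) / (b - v) = -1 := by rw [← neg_div_self hbv]; ring_nf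
  simp only [htop, hbot, arcsin_one, arcsin_neg_one, sub_self, sqrt_zero, zero_mul, mul_zero]
  ring

lemma sqrt_sub_div_sqrt_sub_eq_zero_of_notMem_Ioc {v b u : ℝ} (hu : u ∈ Ioi v \ Ioc v b) :
    √(b - u) / √(u - v) = 0 := by
  obtain ⟨hvu, hnot⟩ := hu
  have hbu : b < u := not_le.1 fun hub => hnot ⟨hvu, hub⟩
  rw [sqrt_eq_zero'.2 (sub_nonpos.2 hbu.le), zero_div]

lemma integrableOn_Ioi_sqrt_sub_div_sqrt_sub (b v : ℝ) :
    IntegrableOn (fun u => √(b - u) / √(u - v)) (Ioi v) :=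
  (integrableOn_Ioc_div_sqrt_sub (by fun_prop) v b).of_forall_sdiff_eq_zero measurableSet_Ioi
    fun _ hu => sqrt_sub_div_sqrt_sub_eq_zero_of_notMem_Ioc hu

lemma setIntegral_Ioi_sqrt_sub_div_sqrt_sub (b v : ℝ) :
    ∫ u in Ioi v, √(b - u) / √(u - v) = π / 2 * max (b - v) 0 := by
  rw [setIntegral_eq_of_subset_of_forall_sdiff_eq_zero measurableSet_Ioi Ioc_subset_Ioi_self
    fun _ hu => sqrt_sub_div_sqrt_sub_eq_zero_of_notMem_Ioc hu]
  rcases lt_or_ge v b with hvb | hbv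
  · rw [← intervalIntegral.integral_of_le hvb.le, integral_sqrt_sub_div_sqrt_sub hvb,
      max_eq_left (sub_pos.2 hvb).le]
    ring
  · rw [Ioc_eq_empty_of_le hbv, Measure.restrict_empty, integral_zero_measure,
      max_eq_right (sub_nonpos.2 hbv), mul_zero]

theorem stmt5 (X Y : ℝ) (hX : 1 < X) (hY : 0 < Y)
    (H : ℝ) (hH : H = Y ^ 2 + 2 * Y * X)
    (g F : ℝ → ℝ)
    (hg : ∀ y, g y = if y ≤ X ^ 2 then 1
      else if y ≤ (X + Y) ^ 2 then ((X + Y) ^ 2 - y) / H else 0)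
    (hF : ∀ u, F u = if u ≤ (X + Y) ^ 2 then
      (2 / (π * H)) * (Real.sqrt ((X + Y) ^ 2 - u) - Real.sqrt (max (X ^ 2 - u) 0)) else 0) :
    ∀ v ≥ (0 : ℝ), ∫ u in Set.Ioi v, F u / Real.sqrt (u - v) = g v := by
  intro v _
  have hH0 : 0 < H := by rw [hH]; nlinarith
  have hHsq : (X + Y) ^ 2 - X ^ 2 = H := by rw [hH]; ring
  have hsq_lt : X ^ 2 < (X + Y) ^ 2 := by linarith
  -- `Real.sqrt` vanishes on `(-∞, 0]`, so the cut-offs in `F` are built into the square roots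
  have hF_eq : ∀ u, F u / √(u - v) =
      2 / (π * H) * (√((X + Y) ^ 2 - u) / √(u - v) - √(X ^ 2 - u) / √(u - v)) := by
    intro u
    have hmax : √(max (X ^ 2 - u) 0) = √(X ^ 2 - u) := by
      rcases le_total (X ^ 2 - u) 0 with h | h
      · rw [max_eq_right h, sqrt_zero, sqrt_eq_zero'.2 h]
      · rw [max_eq_left h]
    rw [hF, hmax]
    split_ifs with hu
    · ring
    · rw [sqrt_eq_zero'.2 (by linarith : (X + Y) ^ 2 - u ≤ 0),
        sqrt_eq_zero'.2 (by linarith : X ^ 2 - u ≤ 0)]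
      ring
  simp_rw [hF_eq]
  rw [integral_const_mul, integral_sub (integrableOn_Ioi_sqrt_sub_div_sqrt_sub _ v)
    (integrableOn_Ioi_sqrt_sub_div_sqrt_sub _ v), setIntegral_Ioi_sqrt_sub_div_sqrt_sub,
    setIntegral_Ioi_sqrt_sub_div_sqrt_sub, hg]
  split_ifs with h₁ h₂
  · rw [max_eq_left (by linarith), max_eq_left (by linarith)]
    field_simp
    linear_combination hHsq
  · rw [max_eq_left (by linarith), max_eq_right (by linarith)]
    field_simp
    ring
  · rw [max_eq_right (by linarith), max_eq_right (by linarith)]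
    ring
end

section
/- With X > 1, Y > 0, H = Y² + 2XY, a = √(X²-1), A = √((X+Y)²-1), and f⁺ as defined (f⁺(x²+1) = (2/(πH))x(√(A²-x²) - √(a²-x²)) for x ≤ a, = (2/(πH))x√(A²-x²) for a ≤ x ≤ A, = 0 else), the function q⁺(z) = 2∫_{√(z²-1)}^∞ f⁺(x²+1)/√(x² - (z²-1)) dx (for z ≥ 1) satisfies: q⁺(z) = 1 for 1 ≤ z ≤ X, 0 ≤ q⁺(z) ≤ 1 for X ≤ z ≤ X + Y, and q⁺(z) = 0 for z ≥ X + Y. In particular q⁺ dominates the indicator function of [1, X]. -/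
open Real MeasureTheory Set

/-!
Since `k x = C x (√(A² - x²) - √(a² - x²))` for `x ≥ 0` (the square roots vanish past
their endpoints), `q` is a difference of two Abel-type integrals
`∫_{√v}^∞ x √(w - x²) / √(x² - v) dx = (π / 4) max (w - v) 0`,
computed with the substitution `x = √(v + (w - v) sin² θ)`, which turns the integrand into
`(w - v) cos² θ`. With `v = z² - 1` and `H = (X + Y)² - X²` this gives `q z = g⁺(z²)` for
the ramp `g⁺(y) = (max ((X + Y)² - y) 0 - max (X² - y) 0) / H`, which is `1` for `y ≤ X²`,
decreases linearly to `0` at `(X + Y)²` and vanishes beyond.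
-/

section AbelIntegral

variable {v w : ℝ}

lemma sqrt_sub_sq_eq_zero_of_sqrt_lt {x : ℝ} (hx : √w < x) : √(w - x ^ 2) = 0 := by
  have hx0 : 0 < x := (sqrt_nonneg w).trans_lt hx
  exact sqrt_eq_zero_of_nonpos (by linarith [(sqrt_lt' hx0).mp hx])

lemma add_mul_sin_sq_pos (hv : 0 ≤ v) (hvw : v < w) {θ : ℝ} (hθ : θ ∈ Ioo 0 (π / 2)) :
    0 < v + (w - v) * sin θ ^ 2 := by
  have := sin_pos_of_mem_Ioo (Ioo_subset_Ioo_right (half_le_self pi_pos.le) hθ)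
  positivity

lemma hasDerivAt_sqrt_add_mul_sin_sq (hv : 0 ≤ v) (hvw : v < w) {θ : ℝ}
    (hθ : θ ∈ Ioo 0 (π / 2)) :
    HasDerivAt (fun θ => √(v + (w - v) * sin θ ^ 2))
      ((w - v) * sin θ * cos θ / √(v + (w - v) * sin θ ^ 2)) θ := by
  have hpos := add_mul_sin_sq_pos hv hvw hθ
  convert ((((hasDerivAt_sin θ).fun_pow 2).const_mul (w - v)).const_add v).sqrt hpos.ne' using 1
  field_simp
  ring

lemma deriv_mul_sqrt_div_sqrt_sin_subst (hv : 0 ≤ v) (hvw : v < w) {θ : ℝ}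
    (hθ : θ ∈ Ioo 0 (π / 2)) :
    ((w - v) * sin θ * cos θ / √(v + (w - v) * sin θ ^ 2)) •
      (√(v + (w - v) * sin θ ^ 2) * √(w - √(v + (w - v) * sin θ ^ 2) ^ 2) /
        √(√(v + (w - v) * sin θ ^ 2) ^ 2 - v)) = (w - v) * cos θ ^ 2 := by
  have hpos := add_mul_sin_sq_pos hv hvw hθ
  have hsin : 0 < sin θ := sin_pos_of_mem_Ioo (Ioo_subset_Ioo_right (half_le_self pi_pos.le) hθ)
  have hcos : 0 < cos θ := cos_pos_of_mem_Ioo (Ioo_subset_Ioo_left (by linarith [pi_pos]) hθ)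
  have hc : 0 < w - v := by linarith
  have hw : w - (v + (w - v) * sin θ ^ 2) = (w - v) * cos θ ^ 2 := by
    linear_combination -(w - v) * sin_sq_add_cos_sq θ
  rw [sq_sqrt hpos.le, hw, add_sub_cancel_left, sqrt_mul hc.le, sqrt_mul hc.le,
    sqrt_sq hcos.le, sqrt_sq hsin.le, smul_eq_mul]
  have := sqrt_pos.mpr hpos
  have := sqrt_pos.mpr hc
  field_simp

lemma integral_Icc_mul_sqrt_div_sqrt (hv : 0 ≤ v) (hvw : v < w) :
    IntegrableOn (fun x => x * √(w - x ^ 2) / √(x ^ 2 - v)) (Icc √v √w) ∧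
      ∫ x in Icc √v √w, x * √(w - x ^ 2) / √(x ^ 2 - v) = π / 4 * (w - v) := by
  have hcont : ContinuousOn (fun θ => √(v + (w - v) * sin θ ^ 2)) (Icc 0 (π / 2)) := by
    fun_prop
  have hderiv := fun θ (hθ : θ ∈ Ioo 0 (π / 2)) => hasDerivAt_sqrt_add_mul_sin_sq hv hvw hθ
  have hderiv_nonneg : ∀ θ ∈ Ioo 0 (π / 2),
      0 ≤ (w - v) * sin θ * cos θ / √(v + (w - v) * sin θ ^ 2) := fun θ hθ => by
    have := sin_pos_of_mem_Ioo (Ioo_subset_Ioo_right (half_le_self pi_pos.le) hθ)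
    have := cos_pos_of_mem_Ioo (Ioo_subset_Ioo_left (by linarith [pi_pos]) hθ)
    have : 0 < w - v := by linarith
    positivity
  have hπ : 0 ≤ π / 2 := by positivity
  have hends : √(v + (w - v) * sin 0 ^ 2) = √v ∧
      √(v + (w - v) * sin (π / 2) ^ 2) = √w := by
    simp
  have hcos_int : IntegrableOn (fun θ => (w - v) * cos θ ^ 2) (Ioo 0 (π / 2)) :=
    (Continuous.integrableOn_Icc (by fun_prop)).mono_set Ioo_subset_Icc_self
  constructor
  · rw [← hends.1, ← hends.2, ← integrableOn_Icc_deriv_smul_iff_of_deriv_nonneg hcont hderiv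
      hderiv_nonneg hπ, integrableOn_Icc_iff_integrableOn_Ioo]
    exact hcos_int.congr_fun (fun θ hθ => (deriv_mul_sqrt_div_sqrt_sin_subst hv hvw hθ).symm)
      measurableSet_Ioo
  · rw [← hends.1, ← hends.2, ← integral_Icc_deriv_smul_of_deriv_nonneg hcont hderiv
      hderiv_nonneg hπ, integral_Icc_eq_integral_Ioo,
      setIntegral_congr_fun measurableSet_Ioo
        (fun θ hθ => deriv_mul_sqrt_div_sqrt_sin_subst hv hvw hθ),
      ← integral_Ioc_eq_integral_Ioo, ← intervalIntegral.integral_of_le hπ,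
      intervalIntegral.integral_const_mul, integral_cos_sq]
    simp only [cos_pi_div_two, sin_pi_div_two, mul_one, cos_zero, sin_zero, mul_zero, sub_self,
      zero_add, sub_zero]
    ring

lemma integral_Ioi_mul_sqrt_div_sqrt (hv : 0 ≤ v) (w : ℝ) :
    IntegrableOn (fun x => x * √(w - x ^ 2) / √(x ^ 2 - v)) (Ioi √v) ∧
      ∫ x in Ioi √v, x * √(w - x ^ 2) / √(x ^ 2 - v) = π / 4 * max (w - v) 0 := by
  have hvanish : ∀ x ∈ Ioi √v \ Ioc √v √w, x * √(w - x ^ 2) / √(x ^ 2 - v) = 0 := by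
    rintro x ⟨hvx, hx⟩
    have hwx : √w < x := lt_of_not_ge fun h => hx ⟨hvx, h⟩
    rw [sqrt_sub_sq_eq_zero_of_sqrt_lt hwx, mul_zero, zero_div]
  have hIoc : IntegrableOn (fun x => x * √(w - x ^ 2) / √(x ^ 2 - v)) (Ioc √v √w) ∧
      ∫ x in Ioc √v √w, x * √(w - x ^ 2) / √(x ^ 2 - v) = π / 4 * max (w - v) 0 := by
    rcases le_or_gt w v with hwv | hvw
    · rw [Ioc_eq_empty (sqrt_le_sqrt hwv).not_gt, max_eq_right (by linarith)]
      simp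
    · rw [← integrableOn_Icc_iff_integrableOn_Ioc, ← integral_Icc_eq_integral_Ioc,
        max_eq_left (by linarith)]
      exact integral_Icc_mul_sqrt_div_sqrt hv hvw
  refine ⟨hIoc.1.of_forall_sdiff_eq_zero measurableSet_Ioi hvanish, ?_⟩
  rw [setIntegral_eq_of_subset_of_forall_sdiff_eq_zero measurableSet_Ioi Ioc_subset_Ioi_self
    hvanish, hIoc.2]

lemma integral_Ioi_mul_sub_sqrt_div_sqrt (hv : 0 ≤ v) (C a A : ℝ) :
    ∫ x in Ioi √v, C * x * (√(A ^ 2 - x ^ 2) - √(a ^ 2 - x ^ 2)) / √(x ^ 2 - v) =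
      C * (π / 4) * (max (A ^ 2 - v) 0 - max (a ^ 2 - v) 0) := by
  obtain ⟨hintA, hvalA⟩ := integral_Ioi_mul_sqrt_div_sqrt hv (A ^ 2)
  obtain ⟨hinta, hvala⟩ := integral_Ioi_mul_sqrt_div_sqrt hv (a ^ 2)
  calc ∫ x in Ioi √v, C * x * (√(A ^ 2 - x ^ 2) - √(a ^ 2 - x ^ 2)) / √(x ^ 2 - v)
      = C * ∫ x in Ioi √v, (x * √(A ^ 2 - x ^ 2) / √(x ^ 2 - v) -
          x * √(a ^ 2 - x ^ 2) / √(x ^ 2 - v)) := by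
        rw [← integral_const_mul]
        congr with x
        ring
    _ = C * (π / 4) * (max (A ^ 2 - v) 0 - max (a ^ 2 - v) 0) := by
        rw [integral_sub hintA hinta, hvalA, hvala]
        ring

end AbelIntegral

lemma ite_eq_mul_sub_sqrt {C a A x : ℝ} (ha : 0 ≤ a) (hA : 0 ≤ A) (hx : 0 ≤ x) :
    (if 0 ≤ x ∧ x ≤ a then C * x * (√(A ^ 2 - x ^ 2) - √(a ^ 2 - x ^ 2))
      else if a ≤ x ∧ x ≤ A then C * x * √(A ^ 2 - x ^ 2) else 0) =
      C * x * (√(A ^ 2 - x ^ 2) - √(a ^ 2 - x ^ 2)) := by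
  split_ifs with hxa hxA
  · rfl
  · rw [sqrt_eq_zero_of_nonpos (x := a ^ 2 - x ^ 2) (by nlinarith [not_and.mp hxa hx]), sub_zero]
  · have hax : a < x := lt_of_not_ge (not_and.mp hxa hx)
    have hAx : A < x := lt_of_not_ge (not_and.mp hxA hax.le)
    rw [sqrt_eq_zero_of_nonpos (by nlinarith), sqrt_eq_zero_of_nonpos (by nlinarith)]
    ring

noncomputable def rampProfile (U V y : ℝ) : ℝ := (max (V - y) 0 - max (U - y) 0) / (V - U)

lemma rampProfile_of_le_left {U V y : ℝ} (hy : y ≤ U) (hUV : U < V) :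
    rampProfile U V y = 1 := by
  rw [rampProfile, max_eq_left (by linarith), max_eq_left (by linarith),
    sub_sub_sub_cancel_right, div_self (by linarith)]

lemma rampProfile_mem_Icc {U V y : ℝ} (hU : U ≤ y) (hV : y ≤ V) :
    rampProfile U V y ∈ Icc 0 1 := by
  rw [rampProfile, max_eq_left (sub_nonneg.2 hV), max_eq_right (sub_nonpos.2 hU), sub_zero]
  exact ⟨div_nonneg (by linarith) (by linarith),
    div_le_one_of_le₀ (by linarith) (by linarith)⟩

lemma rampProfile_of_right_le {U V y : ℝ} (hUV : U ≤ V) (hy : V ≤ y) :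
    rampProfile U V y = 0 := by
  rw [rampProfile, max_eq_right (by linarith), max_eq_right (by linarith), sub_zero, zero_div]

theorem stmt7 (X Y : ℝ) (hX : 1 < X) (hY : 0 < Y)
    (H a A : ℝ) (hH : H = Y ^ 2 + 2 * X * Y)
    (ha : a = Real.sqrt (X ^ 2 - 1)) (hA : A = Real.sqrt ((X + Y) ^ 2 - 1))
    (k : ℝ → ℝ)
    (hk : ∀ x, k x = if 0 ≤ x ∧ x ≤ a then
        (2 / (π * H)) * x * (Real.sqrt (A ^ 2 - x ^ 2) - Real.sqrt (a ^ 2 - x ^ 2))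
      else if a ≤ x ∧ x ≤ A then (2 / (π * H)) * x * Real.sqrt (A ^ 2 - x ^ 2)
      else 0)
    (q : ℝ → ℝ)
    (hq : ∀ z, q z = 2 * ∫ x in Set.Ioi (Real.sqrt (z ^ 2 - 1)),
      k x / Real.sqrt (x ^ 2 - (z ^ 2 - 1))) :
    (∀ z, 1 ≤ z → z ≤ X → q z = 1) ∧
    (∀ z, X ≤ z → z ≤ X + Y → 0 ≤ q z ∧ q z ≤ 1) ∧
    (∀ z, X + Y ≤ z → q z = 0) ∧
    (∀ z, 1 ≤ z → Set.indicator (Set.Icc (1 : ℝ) X) (fun _ => (1 : ℝ)) z ≤ q z) := by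
  have hH' : H = (X + Y) ^ 2 - X ^ 2 := by rw [hH]; ring
  have hq_eq : ∀ z, 1 ≤ z → q z = rampProfile (X ^ 2) ((X + Y) ^ 2) (z ^ 2) := by
    intro z hz
    have hk' : ∀ x ∈ Ioi √(z ^ 2 - 1), k x / √(x ^ 2 - (z ^ 2 - 1)) =
        2 / (π * H) * x * (√(A ^ 2 - x ^ 2) - √(a ^ 2 - x ^ 2)) / √(x ^ 2 - (z ^ 2 - 1)) :=
      fun x hx => by
        rw [hk, ite_eq_mul_sub_sqrt (ha ▸ sqrt_nonneg _) (hA ▸ sqrt_nonneg _)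
          ((sqrt_nonneg _).trans hx.le)]
    rw [hq, setIntegral_congr_fun measurableSet_Ioi hk',
      integral_Ioi_mul_sub_sqrt_div_sqrt (by nlinarith), ha, hA, sq_sqrt (by nlinarith),
      sq_sqrt (by nlinarith), sub_sub_sub_cancel_right, sub_sub_sub_cancel_right, rampProfile,
      ← hH']
    field_simp
    ring
  have hq_left : ∀ z, 1 ≤ z → z ≤ X → q z = 1 := fun z hz hzX => by
    rw [hq_eq z hz, rampProfile_of_le_left (by nlinarith) (by nlinarith)]
  have hq_mid : ∀ z, X ≤ z → z ≤ X + Y → 0 ≤ q z ∧ q z ≤ 1 := fun z hXz hzXY => by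
    rw [hq_eq z (by linarith)]
    exact rampProfile_mem_Icc (by nlinarith) (by nlinarith)
  have hq_right : ∀ z, X + Y ≤ z → q z = 0 := fun z hz => by
    rw [hq_eq z (by linarith), rampProfile_of_right_le (by nlinarith) (by nlinarith)]
  refine ⟨hq_left, hq_mid, hq_right, fun z hz => indicator_apply_le' ?_ ?_⟩
  · exact fun hzX => (hq_left z hz hzX.2).ge
  · intro hzX
    rcases le_total z (X + Y) with hzXY | hzXY
    · exact (hq_mid z (le_of_not_ge fun h => hzX ⟨hz, h⟩) hzXY).1
    · exact (hq_right z hzXY).ge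
end

section
/- Let γ₂(s) = (π/2)·Γ((1-2s)/2)Γ((2-s)/2)/(Γ((1-s)/2)²Γ((5-s)/2)) and γ₃(s) = -(1/2)·Γ((-1-s)/2)Γ((s-2)/2)/(Γ((1-s)/2)Γ(s/2)), for s = 1/2 + it with t real, t ≥ 1. Then |γ₂(s)| ≪ t^{-3/2} and |γ₃(s)| ≪ t^{-2}, with absolute implied constants. -/
/-!
On the line `s = 1/2 + it` the factor `γ₃` collapses, by `Γ(z + 1) = z Γ(z)`, to the rational
function `2 / ((s + 1)(s - 2))`.

For `γ₂` put `y = t/2`. The reflection formula gives `|Γ(-it)|² = π / (t sinh πt)` and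
`|Γ(1/2 - iy)|² = π / cosh πy`, so everything reduces to bounding
`|Γ(3/4 - iy) Γ(1/2 - iy) Γ(3/2 - iy)| / |Γ(1/4 - iy)² Γ(9/4 - iy)|` by an absolute constant.
Both triples of arguments have real parts summing to `11/4`, so in Euler's limit
`Γ(z) = lim n^z n! / (z (z + 1) ⋯ (z + n))` the powers of `n` and the factorials cancel and the
ratio becomes a limit of products over `j` of ratios of linear factors. The `j`-th ratio is at
most `exp (w j - w (j + 1))` with `w j = (17/4) y² / (j² + y²)`, and these telescope to
`w 0 = 17/4`.
-/

open Real Complex Filter Finset Topology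
open scoped Nat ComplexConjugate

namespace Complex

lemma norm_GammaSeq (z : ℂ) {n : ℕ} (hn : n ≠ 0) :
    ‖GammaSeq z n‖ = (n : ℝ) ^ z.re * n ! / ∏ j ∈ range (n + 1), ‖z + j‖ := by
  rw [GammaSeq, norm_div, norm_mul, norm_prod, norm_natCast_cpow_of_pos (Nat.pos_of_ne_zero hn)]
  simp

lemma prod_norm_GammaSeq {ι : Type*} (s : Finset ι) (c : ι → ℂ) {n : ℕ} (hn : n ≠ 0) :
    ∏ i ∈ s, ‖GammaSeq (c i) n‖ = (n : ℝ) ^ (∑ i ∈ s, (c i).re) * (n ! : ℝ) ^ #s /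
      ∏ j ∈ range (n + 1), ∏ i ∈ s, ‖c i + j‖ := by
  simp only [norm_GammaSeq _ hn, prod_div_distrib, prod_mul_distrib, prod_const,
    prod_comm (s := range _)]
  rw [rpow_sum_of_pos (by positivity)]

theorem prod_norm_Gamma_le_of_forall_prod_le {ι : Type*} (s : Finset ι) {a b : ι → ℂ} {C : ℝ}
    (hre : ∑ i ∈ s, (a i).re = ∑ i ∈ s, (b i).re) (ha : ∀ i ∈ s, ∀ j : ℕ, a i + j ≠ 0)
    (hC : ∀ n : ℕ, ∏ j ∈ range (n + 1), ∏ i ∈ s, ‖a i + j‖ ≤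
      C * ∏ j ∈ range (n + 1), ∏ i ∈ s, ‖b i + j‖) :
    ∏ i ∈ s, ‖Gamma (b i)‖ ≤ C * ∏ i ∈ s, ‖Gamma (a i)‖ := by
  have hlim (c : ι → ℂ) : Tendsto (fun n ↦ ∏ i ∈ s, ‖GammaSeq (c i) n‖) atTop
      (𝓝 (∏ i ∈ s, ‖Gamma (c i)‖)) :=
    tendsto_finsetProd _ fun i _ ↦ (GammaSeq_tendsto_Gamma (c i)).norm
  refine le_of_tendsto_of_tendsto (hlim b) ((hlim a).const_mul C) ?_
  filter_upwards [eventually_ne_atTop 0] with n hn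
  have hPa : 0 < ∏ j ∈ range (n + 1), ∏ i ∈ s, ‖a i + j‖ :=
    prod_pos fun j _ ↦ prod_pos fun i hi ↦ norm_pos_iff.2 (ha i hi j)
  have hCPb := hPa.trans_le (hC n)
  have hPb := pos_of_mul_pos_right hCPb (pos_of_mul_pos_left hCPb (by positivity)).le
  rw [prod_norm_GammaSeq s b hn, prod_norm_GammaSeq s a hn, hre, ← mul_div_assoc,
    div_le_div_iff₀ hPb hPa]
  set X := (n : ℝ) ^ (∑ i ∈ s, (b i).re) * (n ! : ℝ) ^ #s
  calc X * ∏ j ∈ range (n + 1), ∏ i ∈ s, ‖a i + j‖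
      ≤ X * (C * ∏ j ∈ range (n + 1), ∏ i ∈ s, ‖b i + j‖) := by gcongr; exact hC n
    _ = C * X * ∏ j ∈ range (n + 1), ∏ i ∈ s, ‖b i + j‖ := by ring

lemma Gamma_ne_zero_of_im_ne_zero {z : ℂ} (hz : z.im ≠ 0) : Gamma z ≠ 0 :=
  Gamma_ne_zero fun m hm ↦ hz (by simp [hm])

lemma norm_Gamma_sq_of_re_eq_half {z : ℂ} (hz : z.re = 1 / 2) :
    ‖Gamma z‖ ^ 2 = π / ‖sin (π * z)‖ := by
  have h : 1 - z = conj z := by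
    apply Complex.ext <;> norm_num [hz]
  have := congrArg norm (Gamma_mul_Gamma_one_sub z)
  rwa [h, Gamma_conj, norm_mul, norm_conj, ← sq, norm_div, norm_real,
    Real.norm_of_nonneg pi_pos.le] at this

lemma norm_Gamma_sq_mul_norm_of_re_eq_zero {z : ℂ} (hz : z.re = 0) (hz0 : z ≠ 0) :
    ‖Gamma z‖ ^ 2 * ‖z‖ = π / ‖sin (π * z)‖ := by
  have h : 1 - z = conj z + 1 := by
    apply Complex.ext <;> simp [hz]
  have := congrArg norm (Gamma_mul_Gamma_one_sub z)
  rwa [h, Gamma_add_one _ ((map_ne_zero _).2 hz0), Gamma_conj, norm_mul, norm_mul, norm_conj,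
    norm_conj, norm_div, norm_real, Real.norm_of_nonneg pi_pos.le, ← mul_assoc, mul_right_comm,
    ← sq] at this

end Complex

lemma norm_Gamma_half_sub_mul_I_sq (y : ℝ) :
    ‖Gamma (↑(1/2 : ℝ) - y * I)‖ ^ 2 = π / Real.cosh (π * y) := by
  rw [norm_Gamma_sq_of_re_eq_half (by simp)]
  have : (π : ℂ) * (↑(1/2 : ℝ) - y * I) = π / 2 - ↑(π * y) * I := by push_cast; ring
  rw [this, Complex.sin_pi_div_two_sub, cos_mul_I, ← ofReal_cosh, norm_real,
    Real.norm_of_nonneg (Real.cosh_pos _).le]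

lemma norm_Gamma_neg_mul_I_sq {t : ℝ} (ht : 0 < t) :
    ‖Gamma (-(t * I))‖ ^ 2 = π / (t * Real.sinh (π * t)) := by
  have h := norm_Gamma_sq_mul_norm_of_re_eq_zero (z := -(t * I)) (by simp) (by simp [ht.ne'])
  have : (π : ℂ) * -(t * I) = -(↑(π * t) * I) := by push_cast; ring
  have hsinh : 0 < Real.sinh (π * t) := Real.sinh_pos_iff.2 (by positivity)
  rw [this, Complex.sin_neg, sin_mul_I, ← ofReal_sinh] at h
  simp only [norm_neg, norm_mul, norm_I, mul_one, norm_real, Real.norm_of_nonneg ht.le,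
    Real.norm_of_nonneg hsinh.le] at h
  rw [mul_comm t, ← div_div, ← h, mul_div_cancel_right₀ _ ht.ne']

lemma pi_mul_abs_div_cosh_le_norm_Gamma_mul (y : ℝ) :
    π * |y| / Real.cosh (π * y) ≤
      ‖Gamma (↑(1/2 : ℝ) - y * I)‖ * ‖Gamma (↑(3/2 : ℝ) - y * I)‖ := by
  have hz : (↑(1/2 : ℝ) - y * I : ℂ) ≠ 0 := fun h ↦ by simpa using congrArg re h
  have hy : |y| ≤ ‖(↑(1/2 : ℝ) - y * I : ℂ)‖ := by
    simpa using abs_im_le_norm (↑(1/2 : ℝ) - y * I : ℂ)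
  have h32 : (↑(3/2 : ℝ) - y * I : ℂ) = ↑(1/2 : ℝ) - y * I + 1 := by push_cast; ring
  rw [h32, Gamma_add_one _ hz, norm_mul, ← mul_assoc, mul_right_comm, ← sq,
    norm_Gamma_half_sub_mul_I_sq, mul_comm π, mul_div_assoc]
  exact (mul_le_mul_of_nonneg_right hy (by positivity)).trans_eq (mul_comm _ _)

lemma cosh_sq_le_sinh_two_mul {x : ℝ} (hx : 1 ≤ x) : Real.cosh x ^ 2 ≤ Real.sinh (2 * x) := by
  have h3 : 3 ≤ Real.exp x * Real.exp x := by
    rw [← Real.exp_add]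
    linarith [add_one_le_exp (x + x)]
  have hcosh : Real.cosh x ≤ 2 * Real.sinh x := by
    rw [Real.cosh_eq, Real.sinh_eq, Real.exp_neg]
    have hpos := Real.exp_pos x
    field_simp
    nlinarith
  rw [Real.sinh_two_mul, sq]
  nlinarith [Real.cosh_pos x]

lemma norm_Gamma_neg_mul_I_mul_cosh_le {t : ℝ} (ht : 1 ≤ t) :
    ‖Gamma (-(t * I))‖ * Real.cosh (π * (t / 2)) ≤ 2 * t ^ (-(1 : ℝ) / 2) := by
  have ht0 : 0 < t := by positivity
  have hsinh : 0 < Real.sinh (π * t) := Real.sinh_pos_iff.2 (by positivity)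
  have hcosh := cosh_sq_le_sinh_two_mul (x := π * (t / 2)) (by nlinarith [pi_gt_three])
  rw [show 2 * (π * (t / 2)) = π * t by ring] at hcosh
  refine le_of_pow_le_pow_left₀ two_ne_zero (by positivity) ?_
  rw [mul_pow, norm_Gamma_neg_mul_I_sq ht0, mul_pow, ← rpow_mul_natCast ht0.le]
  calc π / (t * Real.sinh (π * t)) * Real.cosh (π * (t / 2)) ^ 2
      ≤ π / (t * Real.sinh (π * t)) * Real.sinh (π * t) := by gcongr
    _ = π * t ^ (-1 : ℝ) := by rw [rpow_neg_one]; field_simp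
    _ ≤ 4 * t ^ (-1 : ℝ) := by gcongr; exact pi_lt_four.le
    _ = _ := by norm_num

lemma norm_ofReal_sub_mul_I_add_natCast_sq (a y : ℝ) (j : ℕ) :
    ‖(a - y * I + j : ℂ)‖ ^ 2 = (j + a) ^ 2 + y ^ 2 := by
  have : (a - y * I + j : ℂ) = ↑(j + a) + ↑(-y) * I := by push_cast; ring
  rw [this, Complex.sq_norm, normSq_add_mul_I, neg_sq]

-- Cleared of denominators the difference is a polynomial in `j` and `y²` with nonnegative
-- coefficients.
lemma factor_poly_le (j : ℕ) (y : ℝ) :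
    ((j + 1/4) ^ 2 + y ^ 2) ^ 2 * ((j + 9/4) ^ 2 + y ^ 2) *
        ((j ^ 2 + y ^ 2) * ((j + 1) ^ 2 + y ^ 2)) ≤
      ((j ^ 2 + y ^ 2) * ((j + 1) ^ 2 + y ^ 2) + 17/2 * y ^ 2 * (2 * j + 1)) *
        (((j + 3/4) ^ 2 + y ^ 2) * ((j + 1/2) ^ 2 + y ^ 2) * ((j + 3/2) ^ 2 + y ^ 2)) :=
  sub_nonneg.1 (by ring_nf; positivity)

noncomputable def tailWeight (y : ℝ) (j : ℕ) : ℝ := 17 / 4 * y ^ 2 / ((j : ℝ) ^ 2 + y ^ 2)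

lemma norm_factor_le (y : ℝ) (hy : y ≠ 0) (j : ℕ) :
    ‖(↑(1/4 : ℝ) - y * I + j : ℂ)‖ * ‖(↑(1/4 : ℝ) - y * I + j : ℂ)‖ *
        ‖(↑(9/4 : ℝ) - y * I + j : ℂ)‖ ≤
      Real.exp (tailWeight y j - tailWeight y (j + 1)) *
        (‖(↑(3/4 : ℝ) - y * I + j : ℂ)‖ * ‖(↑(1/2 : ℝ) - y * I + j : ℂ)‖ *
          ‖(↑(3/2 : ℝ) - y * I + j : ℂ)‖) := by
  set ε := tailWeight y j - tailWeight y (j + 1)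
  have hA : 0 < (j : ℝ) ^ 2 + y ^ 2 := by positivity
  have hB : 0 < ((j : ℝ) + 1) ^ 2 + y ^ 2 := by positivity
  have hε : 1 + 2 * ε =
      ((j ^ 2 + y ^ 2) * ((j + 1) ^ 2 + y ^ 2) + 17/2 * y ^ 2 * (2 * j + 1)) /
        ((j ^ 2 + y ^ 2) * ((j + 1) ^ 2 + y ^ 2)) := by
    simp only [ε, tailWeight]
    push_cast
    field_simp
    ring
  have hexp : 1 + 2 * ε ≤ Real.exp ε ^ 2 := by
    rw [← Real.exp_nat_mul, Nat.cast_ofNat]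
    linarith [add_one_le_exp (2 * ε)]
  refine le_of_pow_le_pow_left₀ two_ne_zero (by positivity) ?_
  simp only [mul_pow, norm_ofReal_sub_mul_I_add_natCast_sq]
  calc _ ≤ (1 + 2 * ε) *
        (((j + 3/4) ^ 2 + y ^ 2) * ((j + 1/2) ^ 2 + y ^ 2) * ((j + 3/2) ^ 2 + y ^ 2)) := by
        rw [hε, div_mul_eq_mul_div, le_div_iff₀ (by positivity)]
        linarith [factor_poly_le j y]
    _ ≤ _ := by gcongr

lemma prod_norm_factor_le (y : ℝ) (hy : y ≠ 0) (n : ℕ) :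
    ∏ j ∈ range (n + 1), (‖(↑(1/4 : ℝ) - y * I + j : ℂ)‖ * ‖(↑(1/4 : ℝ) - y * I + j : ℂ)‖ *
        ‖(↑(9/4 : ℝ) - y * I + j : ℂ)‖) ≤
      Real.exp (17 / 4) * ∏ j ∈ range (n + 1), (‖(↑(3/4 : ℝ) - y * I + j : ℂ)‖ *
        ‖(↑(1/2 : ℝ) - y * I + j : ℂ)‖ * ‖(↑(3/2 : ℝ) - y * I + j : ℂ)‖) := by
  have hsum : ∑ j ∈ range (n + 1), (tailWeight y j - tailWeight y (j + 1)) ≤ 17 / 4 := by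
    rw [sum_range_sub']
    have h0 : tailWeight y 0 = 17 / 4 := by simp [tailWeight, hy]
    have hn : 0 ≤ tailWeight y (n + 1) := by unfold tailWeight; positivity
    linarith
  calc _ ≤ ∏ j ∈ range (n + 1), (Real.exp (tailWeight y j - tailWeight y (j + 1)) *
        (‖(↑(3/4 : ℝ) - y * I + j : ℂ)‖ * ‖(↑(1/2 : ℝ) - y * I + j : ℂ)‖ *
          ‖(↑(3/2 : ℝ) - y * I + j : ℂ)‖)) :=
        prod_le_prod (fun _ _ ↦ by positivity) fun j _ ↦ norm_factor_le y hy j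
    _ ≤ _ := by
      rw [prod_mul_distrib, ← Real.exp_sum]
      gcongr

theorem norm_Gamma_mul_le (y : ℝ) (hy : y ≠ 0) :
    ‖Gamma (↑(3/4 : ℝ) - y * I)‖ * ‖Gamma (↑(1/2 : ℝ) - y * I)‖ *
        ‖Gamma (↑(3/2 : ℝ) - y * I)‖ ≤
      Real.exp (17 / 4) * (‖Gamma (↑(1/4 : ℝ) - y * I)‖ * ‖Gamma (↑(1/4 : ℝ) - y * I)‖ *
        ‖Gamma (↑(9/4 : ℝ) - y * I)‖) := by
  have := prod_norm_Gamma_le_of_forall_prod_le univ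
    (a := ![↑(1/4 : ℝ) - y * I, ↑(1/4 : ℝ) - y * I, ↑(9/4 : ℝ) - y * I])
    (b := ![↑(3/4 : ℝ) - y * I, ↑(1/2 : ℝ) - y * I, ↑(3/2 : ℝ) - y * I])
    (by norm_num [Fin.sum_univ_three, Matrix.cons_val_two, Matrix.tail_cons, Matrix.head_cons])
    (fun i _ j h ↦ by fin_cases i <;> simp [Complex.ext_iff, hy] at h)
    (fun n ↦ by simpa [Fin.prod_univ_three] using prod_norm_factor_le y hy n)
  simpa [Fin.prod_univ_three] using this

lemma norm_Gamma_div_le (y : ℝ) (hy : 0 < y) :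
    ‖Gamma (↑(3/4 : ℝ) - y * I)‖ /
        (‖Gamma (↑(1/4 : ℝ) - y * I)‖ ^ 2 * ‖Gamma (↑(9/4 : ℝ) - y * I)‖) ≤
      Real.exp (17 / 4) * Real.cosh (π * y) / (π * y) := by
  have hpos (a : ℝ) : 0 < ‖Gamma (↑a - y * I)‖ :=
    norm_pos_iff.2 (Gamma_ne_zero_of_im_ne_zero (by simp [hy.ne']))
  have hlow := pi_mul_abs_div_cosh_le_norm_Gamma_mul y
  rw [abs_of_pos hy] at hlow
  have hcosh := Real.cosh_pos (π * y)
  calc _ ≤ Real.exp (17 / 4) /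
        (‖Gamma (↑(1/2 : ℝ) - y * I)‖ * ‖Gamma (↑(3/2 : ℝ) - y * I)‖) := by
        rw [div_le_div_iff₀ (mul_pos (pow_pos (hpos _) 2) (hpos _)) (mul_pos (hpos _) (hpos _)),
          sq, ← mul_assoc]
        exact norm_Gamma_mul_le y hy.ne'
    _ ≤ Real.exp (17 / 4) / (π * y / Real.cosh (π * y)) := by gcongr
    _ = _ := by field_simp

noncomputable def γ₂ (s : ℂ) : ℂ :=
  (π / 2) * (Gamma ((1 - 2 * s) / 2) * Gamma ((2 - s) / 2) /
    (Gamma ((1 - s) / 2) ^ 2 * Gamma ((5 - s) / 2)))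

noncomputable def γ₃ (s : ℂ) : ℂ :=
  -(1 / 2) * (Gamma ((-1 - s) / 2) * Gamma ((s - 2) / 2) / (Gamma ((1 - s) / 2) * Gamma (s / 2)))

lemma norm_γ₂_half_add_mul_I (t : ℝ) :
    ‖γ₂ (1 / 2 + t * I)‖ = π / 2 * (‖Gamma (-(t * I))‖ * ‖Gamma (↑(3/4 : ℝ) - ↑(t / 2) * I)‖ /
      (‖Gamma (↑(1/4 : ℝ) - ↑(t / 2) * I)‖ ^ 2 * ‖Gamma (↑(9/4 : ℝ) - ↑(t / 2) * I)‖)) := by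
  have e1 : (1 - 2 * (1 / 2 + t * I)) / 2 = -(t * I) := by ring
  have e2 : (2 - (1 / 2 + t * I)) / 2 = ↑(3/4 : ℝ) - ↑(t / 2) * I := by push_cast; ring
  have e3 : (1 - (1 / 2 + t * I)) / 2 = ↑(1/4 : ℝ) - ↑(t / 2) * I := by push_cast; ring
  have e4 : (5 - (1 / 2 + t * I)) / 2 = ↑(9/4 : ℝ) - ↑(t / 2) * I := by push_cast; ring
  rw [γ₂, e1, e2, e3, e4, norm_mul, norm_div, norm_div, norm_mul, norm_mul, norm_pow, norm_real,
    Real.norm_of_nonneg pi_pos.le, RCLike.norm_ofNat]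

lemma norm_γ₂_half_add_mul_I_le {t : ℝ} (ht : 1 ≤ t) :
    ‖γ₂ (1 / 2 + t * I)‖ ≤ 2 * Real.exp (17 / 4) * t ^ (-(3 : ℝ) / 2) := by
  have ht0 : 0 < t := by positivity
  rw [norm_γ₂_half_add_mul_I]
  calc _ ≤ π / 2 * ‖Gamma (-(t * I))‖ *
        (Real.exp (17 / 4) * Real.cosh (π * (t / 2)) / (π * (t / 2))) := by
        rw [mul_div_assoc, ← mul_assoc]
        exact mul_le_mul_of_nonneg_left (norm_Gamma_div_le (t / 2) (by positivity))
          (by positivity)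
    _ = Real.exp (17 / 4) * (‖Gamma (-(t * I))‖ * Real.cosh (π * (t / 2))) / t := by
        field_simp
    _ ≤ Real.exp (17 / 4) * (2 * t ^ (-(1 : ℝ) / 2)) / t := by
        gcongr Real.exp (17 / 4) * ?_ / t
        exact norm_Gamma_neg_mul_I_mul_cosh_le ht
    _ = _ := by
        rw [show -(3 : ℝ) / 2 = -(1 : ℝ) / 2 - 1 by norm_num, rpow_sub_one ht0.ne']
        ring

lemma γ₃_eq_of_im_ne_zero {s : ℂ} (hs : s.im ≠ 0) : γ₃ s = 2 / ((s + 1) * (s - 2)) := by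
  have ha : (-1 - s) / 2 ≠ 0 := fun h ↦ hs (by simpa using congrArg im h)
  have hb : (s - 2) / 2 ≠ 0 := fun h ↦ hs (by simpa using congrArg im h)
  have hGa : Gamma ((-1 - s) / 2) ≠ 0 := Gamma_ne_zero_of_im_ne_zero (by simpa using hs)
  have hGb : Gamma ((s - 2) / 2) ≠ 0 := Gamma_ne_zero_of_im_ne_zero (by simpa using hs)
  have hneg : -1 - s ≠ 0 := fun h ↦ hs (by simpa using congrArg im h)
  have hadd : s + 1 ≠ 0 := fun h ↦ hs (by simpa using congrArg im h)
  rw [γ₃, show (1 - s) / 2 = (-1 - s) / 2 + 1 by ring, show s / 2 = (s - 2) / 2 + 1 by ring,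
    Gamma_add_one _ ha, Gamma_add_one _ hb]
  field_simp
  ring

lemma norm_γ₃_half_add_mul_I_le {t : ℝ} (ht : 0 < t) :
    ‖γ₃ (1 / 2 + t * I)‖ ≤ 2 * t ^ (-(2 : ℝ)) := by
  rw [γ₃_eq_of_im_ne_zero (by simp [ht.ne']), norm_div, norm_mul, rpow_neg ht.le, rpow_two,
    RCLike.norm_ofNat, ← div_eq_mul_inv]
  have h1 : t ≤ ‖1 / 2 + t * I + 1‖ := by
    simpa [abs_of_pos ht] using abs_im_le_norm (1 / 2 + t * I + 1)
  have h2 : t ≤ ‖1 / 2 + t * I - 2‖ := by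
    simpa [abs_of_pos ht] using abs_im_le_norm (1 / 2 + t * I - 2)
  rw [sq]
  gcongr

theorem stmt14 :
    ∃ C > (0 : ℝ), ∀ t : ℝ, 1 ≤ t →
      ‖((π : ℂ) / 2) *
          (Complex.Gamma ((1 - 2 * (1 / 2 + (t : ℂ) * Complex.I)) / 2) *
            Complex.Gamma ((2 - (1 / 2 + (t : ℂ) * Complex.I)) / 2) /
            ((Complex.Gamma ((1 - (1 / 2 + (t : ℂ) * Complex.I)) / 2)) ^ 2 *
              Complex.Gamma ((5 - (1 / 2 + (t : ℂ) * Complex.I)) / 2)))‖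
        ≤ C * t ^ (-(3 : ℝ) / 2) ∧
      ‖(-(1 / 2 : ℂ)) *
          (Complex.Gamma ((-1 - (1 / 2 + (t : ℂ) * Complex.I)) / 2) *
            Complex.Gamma (((1 / 2 + (t : ℂ) * Complex.I) - 2) / 2) /
            (Complex.Gamma ((1 - (1 / 2 + (t : ℂ) * Complex.I)) / 2) *
              Complex.Gamma ((1 / 2 + (t : ℂ) * Complex.I) / 2)))‖
        ≤ C * t ^ (-(2 : ℝ)) := by
  refine ⟨2 * Real.exp (17 / 4), by positivity, fun t ht ↦ ⟨norm_γ₂_half_add_mul_I_le ht, ?_⟩⟩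
  calc ‖γ₃ (1 / 2 + t * I)‖ ≤ 2 * t ^ (-(2 : ℝ)) := norm_γ₃_half_add_mul_I_le (by positivity)
    _ ≤ 2 * Real.exp (17 / 4) * t ^ (-(2 : ℝ)) := by
      gcongr
      exact le_mul_of_one_le_right zero_le_two (Real.one_le_exp (by norm_num))
end

section
/- Let X > 1, Y > 0, T = √(X² - H - 1) where H = Y² + 2XY < X² - 1, a = √(X² - 1). Define f⁻ by f⁻(x²+1) = (2/(πH)) x (√(a²-x²) - √(T²-x²)) for 0 ≤ x ≤ T, f⁻(x²+1) = (2/(πH)) x √(a²-x²) for T ≤ x ≤ a, and f⁻ = 0 otherwise. Then q⁻(z) := 2∫_{√(z²-1)}^∞ f⁻(x²+1)/√(x²-(z²-1)) dx satisfies q⁻(z) = g⁻(z²), where g⁻(y) = 1 for y ≤ X² - H, (X² - y)/H for X² - H ≤ y ≤ X², and 0 for y ≥ X². In particular q⁻ is dominated by the indicator function of [0, X] on [1, ∞). -/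
/-!
Because `Real.sqrt` vanishes on negatives, `f⁻(x² + 1) = c x √(a² - x²) - c x √(T² - x²)` with
`c = 2 / (π H)`: a difference of two densities of the form `x √(b² - x²)₊`. The Abel integral
`∫_s^∞ x √(b² - x²)₊ / √(x² - s²) dx` equals `π (b² - s²)₊ / 4`: in the variable `u = x²` the
integrand has the explicit primitive `√((b² - u)(u - s²))/2 + (b² - s²)/4 · arcsin(…)`, whose
arcsin term runs from `-π/2` to `π/2`. With `s² = z² - 1` one has `a² - s² = X² - z²` and
`T² - s² = X² - H - z²`, so `q⁻(z) = ((X² - z²)₊ - (X² - H - z²)₊) / H`, which is exactly the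
piecewise linear ramp `g⁻(z²)`; it is at most `1` and vanishes for `z > X`.
-/

open Real MeasureTheory Set

noncomputable def abelPrimitive (α β u : ℝ) : ℝ :=
  √((β - u) * (u - α)) / 2 + (β - α) / 4 * arcsin ((2 * u - α - β) / (β - α))

lemma continuous_abelPrimitive (α β : ℝ) : Continuous (abelPrimitive α β) := by
  unfold abelPrimitive
  fun_prop

lemma hasDerivAt_abelPrimitive {α β u : ℝ} (hαu : α < u) (huβ : u < β) :
    HasDerivAt (abelPrimitive α β) (√(β - u) / (2 * √(u - α))) u := by
  have hp : 0 < β - u := by linarith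
  have hq : 0 < u - α := by linarith
  have hβα : 0 < β - α := by linarith
  have hprod : HasDerivAt (fun v => (β - v) * (v - α)) (β + α - 2 * u) u := by
    refine ((hasDerivAt_id' u).const_sub β).fun_mul ((hasDerivAt_id' u).sub_const α)
      |>.congr_deriv ?_
    ring
  have hw : HasDerivAt (fun v => (2 * v - α - β) / (β - α)) (2 / (β - α)) u := by
    refine ((((hasDerivAt_id' u).const_mul 2).sub_const α).sub_const β).div_const (β - α)
      |>.congr_deriv ?_
    ring
  have hw_sq : 1 - ((2 * u - α - β) / (β - α)) ^ 2 = (2 * √(β - u) * √(u - α) / (β - α)) ^ 2 := by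
    rw [div_pow, div_pow, mul_pow, mul_pow, sq_sqrt hp.le, sq_sqrt hq.le]
    field_simp
    ring
  have hw_lt : |(2 * u - α - β) / (β - α)| < 1 := by
    rw [← sq_lt_one_iff_abs_lt_one]
    nlinarith [hw_sq, show 0 < 2 * √(β - u) * √(u - α) / (β - α) by positivity]
  obtain ⟨hw_gt_neg_one, hw_lt_one⟩ := abs_lt.mp hw_lt
  have harcsin := (hasDerivAt_arcsin hw_gt_neg_one.ne' hw_lt_one.ne).comp u hw
  refine ((hprod.sqrt (by positivity)).div_const 2).add (harcsin.const_mul ((β - α) / 4))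
    |>.congr_deriv ?_
  rw [hw_sq, sqrt_sq (by positivity), sqrt_mul hp.le]
  have hr := sq_sqrt hp.le
  have ht := sq_sqrt hq.le
  have hr0 : 0 < √(β - u) := sqrt_pos.mpr hp
  have ht0 : 0 < √(u - α) := sqrt_pos.mpr hq
  field_simp
  linear_combination (-8) * hr

lemma abelPrimitive_self_right {α β : ℝ} (h : α < β) :
    abelPrimitive α β β = (β - α) / 4 * (π / 2) := by
  rw [abelPrimitive, show 2 * β - α - β = β - α by ring, div_self (sub_pos.mpr h).ne']
  simp

lemma abelPrimitive_self_left {α β : ℝ} (h : α < β) :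
    abelPrimitive α β α = -((β - α) / 4 * (π / 2)) := by
  rw [abelPrimitive, show 2 * α - α - β = -(β - α) by ring, neg_div, div_self (sub_pos.mpr h).ne']
  simp

noncomputable def abelIntegrand (s b x : ℝ) : ℝ := x * √(b ^ 2 - x ^ 2) / √(x ^ 2 - s ^ 2)

lemma abelIntegrand_eq_zero_of_le {s b x : ℝ} (hb : 0 ≤ b) (hbx : b ≤ x) :
    abelIntegrand s b x = 0 := by
  rw [abelIntegrand, sqrt_eq_zero'.mpr (by nlinarith)]
  simp

lemma hasDerivAt_abelPrimitive_sq {s b x : ℝ} (hs : 0 ≤ s) (hsx : s < x) (hxb : x < b) :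
    HasDerivAt (fun x => abelPrimitive (s ^ 2) (b ^ 2) (x ^ 2)) (abelIntegrand s b x) x := by
  have hx : 0 < x := hs.trans_lt hsx
  refine ((hasDerivAt_abelPrimitive (by nlinarith) (by nlinarith)).comp x (hasDerivAt_pow 2 x))
    |>.congr_deriv ?_
  have : 0 < √(x ^ 2 - s ^ 2) := sqrt_pos.mpr (by nlinarith)
  rw [abelIntegrand]
  field_simp
  ring

lemma intervalIntegrable_abelIntegrand {s b : ℝ} (hs : 0 ≤ s) (hsb : s ≤ b) :
    IntervalIntegrable (abelIntegrand s b) volume s b := by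
  refine intervalIntegral.intervalIntegrable_deriv_of_nonneg
    ((continuous_abelPrimitive (s ^ 2) (b ^ 2)).comp (continuous_pow 2)).continuousOn
    (fun x hx => ?_) (fun x hx => ?_)
  all_goals rw [min_eq_left hsb, max_eq_right hsb] at hx
  · exact hasDerivAt_abelPrimitive_sq hs hx.1 hx.2
  · have : 0 ≤ x := hs.trans hx.1.le
    rw [abelIntegrand]
    positivity

lemma integral_abelIntegrand {s b : ℝ} (hs : 0 ≤ s) (hsb : s ≤ b) :
    ∫ x in s..b, abelIntegrand s b x = π * (b ^ 2 - s ^ 2) / 4 := by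
  rcases hsb.eq_or_lt with rfl | hlt
  · simp
  rw [intervalIntegral.integral_eq_sub_of_hasDerivAt_of_le hsb
    ((continuous_abelPrimitive (s ^ 2) (b ^ 2)).comp (continuous_pow 2)).continuousOn
    (fun x hx => hasDerivAt_abelPrimitive_sq hs hx.1 hx.2)
    (intervalIntegrable_abelIntegrand hs hsb)]
  have hsb2 : s ^ 2 < b ^ 2 := by nlinarith
  simp only [Function.comp_apply, abelPrimitive_self_right hsb2, abelPrimitive_self_left hsb2]
  ring

lemma integrableOn_abelIntegrand_Ioi {s b : ℝ} (hs : 0 ≤ s) (hb : 0 ≤ b) :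
    IntegrableOn (abelIntegrand s b) (Ioi s) := by
  rcases le_total b s with hbs | hsb
  · exact integrableOn_zero.congr_fun
      (fun x hx => (abelIntegrand_eq_zero_of_le hb (hbs.trans hx.le)).symm) measurableSet_Ioi
  · exact (intervalIntegrable_abelIntegrand hs hsb).1.of_forall_sdiff_eq_zero measurableSet_Ioi
      fun x hx => abelIntegrand_eq_zero_of_le hb (not_le.mp fun h => hx.2 ⟨hx.1, h⟩).le

lemma integral_abelIntegrand_Ioi {s b : ℝ} (hs : 0 ≤ s) (hb : 0 ≤ b) :
    ∫ x in Ioi s, abelIntegrand s b x = π * max (b ^ 2 - s ^ 2) 0 / 4 := by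
  rcases le_total b s with hbs | hsb
  · rw [setIntegral_congr_fun measurableSet_Ioi
      (fun x hx => abelIntegrand_eq_zero_of_le hb (hbs.trans hx.le)),
      max_eq_right (by nlinarith)]
    simp
  · rw [setIntegral_eq_of_subset_of_forall_sdiff_eq_zero measurableSet_Ioi Ioc_subset_Ioi_self
      fun x hx => abelIntegrand_eq_zero_of_le hb (not_le.mp fun h => hx.2 ⟨hx.1, h⟩).le,
      ← intervalIntegral.integral_of_le hsb, integral_abelIntegrand hs hsb,
      max_eq_left (by nlinarith)]

lemma integral_Ioi_sub_abelIntegrand {c s a T : ℝ} (hs : 0 ≤ s) (ha : 0 ≤ a) (hT : 0 ≤ T) :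
    ∫ x in Ioi s, (c * abelIntegrand s a x - c * abelIntegrand s T x)
      = c * π / 4 * (max (a ^ 2 - s ^ 2) 0 - max (T ^ 2 - s ^ 2) 0) := by
  rw [integral_sub ((integrableOn_abelIntegrand_Ioi hs ha).const_mul _)
      ((integrableOn_abelIntegrand_Ioi hs hT).const_mul _),
    integral_const_mul, integral_const_mul, integral_abelIntegrand_Ioi hs ha,
    integral_abelIntegrand_Ioi hs hT]
  ring

lemma ite_density_eq_sub {c a T x : ℝ} (hT : 0 ≤ T) (ha : 0 ≤ a) (hx : 0 ≤ x) :
    (if 0 ≤ x ∧ x ≤ T then c * x * (√(a ^ 2 - x ^ 2) - √(T ^ 2 - x ^ 2))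
      else if T ≤ x ∧ x ≤ a then c * x * √(a ^ 2 - x ^ 2) else 0)
      = c * x * √(a ^ 2 - x ^ 2) - c * x * √(T ^ 2 - x ^ 2) := by
  split_ifs with hxT hxa
  · ring
  · rw [sqrt_eq_zero'.mpr (show T ^ 2 - x ^ 2 ≤ 0 by nlinarith [hxa.1])]
    ring
  · have hTx : T < x := not_le.mp fun h => hxT ⟨hx, h⟩
    have hax : a < x := not_le.mp fun h => hxa ⟨hTx.le, h⟩
    rw [sqrt_eq_zero'.mpr (by nlinarith), sqrt_eq_zero'.mpr (by nlinarith)]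
    ring

lemma ite_ramp_eq {M H y : ℝ} (hH : 0 < H) :
    (if y ≤ M - H then 1 else if y ≤ M then (M - y) / H else 0)
      = (max (M - y) 0 - max (M - H - y) 0) / H := by
  split_ifs with h₁ h₂
  · rw [max_eq_left (by linarith), max_eq_left (by linarith)]
    field_simp
    ring
  · rw [max_eq_left (by linarith), max_eq_right (by linarith), sub_zero]
  · rw [max_eq_right (by linarith), max_eq_right (by linarith)]
    simp

lemma ite_ramp_sq_le_indicator {X H z : ℝ} (hX : 0 ≤ X) (hH : 0 < H) (hz : 0 ≤ z) :
    (if z ^ 2 ≤ X ^ 2 - H then 1 else if z ^ 2 ≤ X ^ 2 then (X ^ 2 - z ^ 2) / H else 0)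
      ≤ indicator (Icc 0 X) (fun _ => (1 : ℝ)) z := by
  by_cases hzX : z ≤ X
  · rw [indicator_of_mem (show z ∈ Icc 0 X from ⟨hz, hzX⟩)]
    split_ifs with h₁ h₂
    · exact le_rfl
    · rw [div_le_one hH]
      linarith
    · exact zero_le_one
  · rw [indicator_of_notMem fun h => hzX h.2, if_neg (by nlinarith), if_neg (by nlinarith)]

theorem stmt17 (X Y : ℝ) (hX : 1 < X) (hY : 0 < Y)
    (H T a : ℝ) (hH : H = Y ^ 2 + 2 * X * Y) (hH2 : H < X ^ 2 - 1)
    (hT : T = Real.sqrt (X ^ 2 - H - 1)) (ha : a = Real.sqrt (X ^ 2 - 1))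
    (k : ℝ → ℝ)
    (hk : ∀ x, k x = if 0 ≤ x ∧ x ≤ T then
        (2 / (π * H)) * x * (Real.sqrt (a ^ 2 - x ^ 2) - Real.sqrt (T ^ 2 - x ^ 2))
      else if T ≤ x ∧ x ≤ a then (2 / (π * H)) * x * Real.sqrt (a ^ 2 - x ^ 2)
      else 0)
    (q g : ℝ → ℝ)
    (hq : ∀ z, q z = 2 * ∫ x in Set.Ioi (Real.sqrt (z ^ 2 - 1)),
      k x / Real.sqrt (x ^ 2 - (z ^ 2 - 1)))
    (hg : ∀ y, g y = if y ≤ X ^ 2 - H then 1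
      else if y ≤ X ^ 2 then (X ^ 2 - y) / H else 0) :
    (∀ z, 1 ≤ z → q z = g (z ^ 2)) ∧
    (∀ z, 1 ≤ z → q z ≤ Set.indicator (Set.Icc (0 : ℝ) X) (fun _ => (1 : ℝ)) z) := by
  have hH0 : 0 < H := by rw [hH]; positivity
  have hT0 : 0 ≤ T := hT ▸ sqrt_nonneg _
  have ha0 : 0 ≤ a := ha ▸ sqrt_nonneg _
  have hT2 : T ^ 2 = X ^ 2 - H - 1 := by rw [hT, sq_sqrt (by linarith)]
  have ha2 : a ^ 2 = X ^ 2 - 1 := by rw [ha, sq_sqrt (by nlinarith)]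
  have hqg : ∀ z, 1 ≤ z → q z = g (z ^ 2) := by
    intro z hz
    set s := √(z ^ 2 - 1)
    have hs2 : s ^ 2 = z ^ 2 - 1 := sq_sqrt (by nlinarith)
    have hk_split : EqOn (fun x => k x / √(x ^ 2 - (z ^ 2 - 1)))
        (fun x => 2 / (π * H) * abelIntegrand s a x - 2 / (π * H) * abelIntegrand s T x)
        (Ioi s) := fun x hx => by
      dsimp only
      rw [hk, ite_density_eq_sub hT0 ha0 ((sqrt_nonneg _).trans hx.le), ← hs2, abelIntegrand,
        abelIntegrand]
      ring
    have has : a ^ 2 - s ^ 2 = X ^ 2 - z ^ 2 := by rw [ha2, hs2]; ring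
    have hTs : T ^ 2 - s ^ 2 = X ^ 2 - H - z ^ 2 := by rw [hT2, hs2]; ring
    rw [hq, setIntegral_congr_fun measurableSet_Ioi hk_split,
      integral_Ioi_sub_abelIntegrand (sqrt_nonneg _) ha0 hT0, hg, ite_ramp_eq hH0, has, hTs]
    field_simp
    ring
  refine ⟨hqg, fun z hz => ?_⟩
  rw [hqg z hz, hg]
  exact ite_ramp_sq_le_indicator (by linarith) hH0 (by linarith)
end
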